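/- arXiv:2308.06627 — 10 statements merged into one kernel-verified Lean document; each statement's English description precedes it below -/
import Mathlib

section
/- Let J be a Jacobi matrix of order n, let l ∈ ℝ, and let p and q be the characteristic polynomials of J and of J^{(1)} respectively. Then for every z ∈ ℂ one has det(zI_n − J_{l,×}) = (1+il)·p(z) − i·l·z·q(z). -/
open Matrix Polynomial

/-- A Jacobi matrix: real symmetric tridiagonal with positive off-diagonal entries. -/
def IsJacobi {N : ℕ} (J : Matrix (Fin N) (Fin N) ℝ) : Prop :=
  (∀ i j, J i j = J j i) ∧
  (∀ i j : Fin N, (i : ℕ) + 1 < (j : ℕ) → J i j = 0) ∧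
  (∀ i j : Fin N, (i : ℕ) + 1 = (j : ℕ) → 0 < J i j)

/-- The multiplicative perturbation `J_{l,×} = (I + i l e₁ e₁*) J`. -/
noncomputable def mulPert {N : ℕ} [NeZero N] (l : ℝ) (J : Matrix (Fin N) (Fin N) ℝ) :
    Matrix (Fin N) (Fin N) ℂ :=
  (1 + (Complex.I * l) • Matrix.single 0 0 (1 : ℂ)) * J.map (fun x => (x : ℂ))

/-!
Multiplying `J` on the left by `I + i l e₁e₁*` only rescales its first row by `1 + i l`, so the
first row of `zI - J_{l,×}` is `(1 + i l)` times that of `zI - J` minus `i l z e₁`. By linearity of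
the determinant in that row, `det(zI - J_{l,×}) = (1 + i l) p(z) - i l z D`, where `D` is the
determinant of `zI - J` with its first row replaced by `e₁`; expanding along that row gives
`D = q(z)`.
-/

namespace Matrix

variable {ι R : Type*} [DecidableEq ι] [CommRing R]

theorem one_add_smul_single_mul [Fintype ι] (c : R) (i : ι) (B : Matrix ι ι R) :
    (1 + c • single i i 1) * B = B.updateRow i ((1 + c) • B i) := by
  ext a b
  rcases eq_or_ne a i with rfl | h
  · simp [add_mul, add_smul]
  · simp [add_mul, h]

theorem smul_one_sub_updateRow (z : R) (B : Matrix ι ι R) (i : ι) (v : ι → R) :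
    z • 1 - B.updateRow i v = (z • 1 - B).updateRow i (z • Pi.single i 1 - v) := by
  ext a b
  rcases eq_or_ne a i with rfl | h
  · simp [one_apply, Pi.single_apply, eq_comm]
  · simp [h]

theorem det_smul_one_sub_one_add_smul_single_mul [Fintype ι] (z c : R) (i : ι)
    (B : Matrix ι ι R) :
    det (z • 1 - (1 + c • single i i 1) * B) =
      (1 + c) * det (z • 1 - B) - c * z * det ((z • 1 - B).updateRow i (Pi.single i 1)) := by
  have hrow : z • Pi.single i 1 - (1 + c) • B i =
      (1 + c) • (z • 1 - B) i + (-(c * z)) • Pi.single i 1 := by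
    ext j
    rcases eq_or_ne j i with rfl | h
    · simp only [Pi.sub_apply, Pi.smul_apply, Pi.single_eq_same, smul_eq_mul, mul_one, neg_smul,
        Pi.add_apply, sub_apply, smul_apply, one_apply_eq, Pi.neg_apply]
      ring
    · simp [h, one_apply_ne' h]
  rw [one_add_smul_single_mul, smul_one_sub_updateRow, hrow, det_updateRow_add,
    det_updateRow_smul, det_updateRow_smul, updateRow_eq_self]
  ring

theorem det_updateRow_zero_single_zero {n : ℕ} (M : Matrix (Fin (n + 1)) (Fin (n + 1)) R) :
    det (M.updateRow 0 (Pi.single 0 1)) = det (M.submatrix Fin.succ Fin.succ) := by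
  rw [det_succ_row_zero, Fintype.sum_eq_single 0]
  · simp [submatrix]
  · intro j hj
    simp [hj]

end Matrix

theorem stmt0_general (n : ℕ) (J : Matrix (Fin (n + 1)) (Fin (n + 1)) ℝ) (l : ℝ)
    (z : ℂ) :
    (z • (1 : Matrix (Fin (n + 1)) (Fin (n + 1)) ℂ) - mulPert l J).det =
      (1 + Complex.I * l) *
          (z • (1 : Matrix (Fin (n + 1)) (Fin (n + 1)) ℂ) - J.map (fun x => (x : ℂ))).det
        - Complex.I * l * z *
          (z • (1 : Matrix (Fin n) (Fin n) ℂ)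
            - (J.submatrix Fin.succ Fin.succ).map (fun x => (x : ℂ))).det := by
  rw [mulPert, det_smul_one_sub_one_add_smul_single_mul, det_updateRow_zero_single_zero]
  congr 3
  ext i j
  simp [one_apply]

/-- det(zI − J_{l,×}) = (1+il)·p(z) − i·l·z·q(z), where p, q are the
characteristic polynomials of J and of J⁽¹⁾ (J with first row and column deleted). -/
theorem stmt0 (n : ℕ) (J : Matrix (Fin (n + 1)) (Fin (n + 1)) ℝ) (hJ : IsJacobi J) (l : ℝ)
    (z : ℂ) :
    (z • (1 : Matrix (Fin (n + 1)) (Fin (n + 1)) ℂ) - mulPert l J).det =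
      (1 + Complex.I * l) *
          (z • (1 : Matrix (Fin (n + 1)) (Fin (n + 1)) ℂ) - J.map (fun x => (x : ℂ))).det
        - Complex.I * l * z *
          (z • (1 : Matrix (Fin n) (Fin n) ℂ)
            - (J.submatrix Fin.succ Fin.succ).map (fun x => (x : ℂ))).det :=
  stmt0_general n J l z
end

section
/- Let J be a Jacobi matrix of order n, l ∈ ℝ, let λ_1,…,λ_n be the eigenvalues of J and z_1,…,z_n the eigenvalues of J_{l,×}, each counted with algebraic multiplicity. Then for every z ∈ ℂ, ∏_{j=1}^n (z − λ_j) = ½·∏_{j=1}^n (z − z_j) + ½·∏_{j=1}^n (z − \bar{z}_j); equivalently, the real parts of the coefficients of the characteristic polynomial of J_{l,×} are exactly the coefficients of the characteristic polynomial of J. In particular Σ_{j=1}^n λ_j² = (Σ_{j=1}^n Re z_j)² − Σ_{j≠k} Re(z_j z_k). -/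
/-!
Left multiplication by `I + i l e₁e₁*` rescales the first row of `J` by `1 + i l`. The determinant
is affine in a single row, so `χ(J_{l,×}) = χ(J) - i l D` with `D` independent of `l`; and complex
conjugation sends `J_{l,×}` to `J_{-l,×}`. Hence `χ(J)` is the average of `χ(J_{l,×})` and its
conjugate, which gives the product formula and the real parts of the coefficients. The identity for
`∑ λ_j²` follows from Vieta's formulas for `e₁, e₂` and Newton's identity `p₂ = e₁² - 2 e₂`.
-/

open Matrix Polynomial

namespace Matrix

variable {R n : Type*} [CommRing R] [DecidableEq n] [Fintype n]

theorem charmatrix_updateRow_add (A : Matrix n n R) (i : n) (v : n → R) :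
    (A.updateRow i (A i + v)).charmatrix = A.charmatrix.updateRow i (A.charmatrix i - C ∘ v) := by
  ext j k : 1
  rcases eq_or_ne j i with rfl | hj
  · simp [charmatrix_apply, sub_sub]
  · simp [charmatrix_apply, hj]

theorem charpoly_updateRow_add_smul (A : Matrix n n R) (i : n) (c : R) :
    (A.updateRow i (A i + c • A i)).charpoly =
      A.charpoly - C c * (A.charmatrix.updateRow i (C ∘ A i)).det := by
  have hrow : C ∘ (c • A i) = C c • (C ∘ A i) := by ext1 j; simp
  rw [charpoly, charmatrix_updateRow_add, hrow, sub_eq_add_neg, ← neg_smul, det_updateRow_add,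
    updateRow_eq_self, det_updateRow_smul, charpoly]
  ring

end Matrix

section MulPert

variable {N : ℕ} [NeZero N] (l : ℝ) (J : Matrix (Fin N) (Fin N) ℝ)

theorem mulPert_eq_updateRow :
    mulPert l J = (J.map Complex.ofRealHom).updateRow 0
      ((J.map Complex.ofRealHom) 0 + (Complex.I * l) • (J.map Complex.ofRealHom) 0) := by
  ext i j
  rcases eq_or_ne i 0 with rfl | hi
  · simp [mulPert, add_mul, single_mul_apply_same]
  · simp [mulPert, add_mul, single_mul_apply_of_ne _ _ _ _ _ hi, hi]

theorem mulPert_map_conj : (mulPert l J).map (starRingEnd ℂ) = mulPert (-l) J := by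
  ext i j
  rcases eq_or_ne i 0 with rfl | hi
  · simp [mulPert_eq_updateRow]
  · simp [mulPert_eq_updateRow, hi]

theorem charpoly_mulPert_add_map_conj :
    (mulPert l J).charpoly + (mulPert l J).charpoly.map (starRingEnd ℂ) =
      2 * J.charpoly.map Complex.ofRealHom := by
  rw [← charpoly_map, mulPert_map_conj, mulPert_eq_updateRow, mulPert_eq_updateRow,
    charpoly_updateRow_add_smul, charpoly_updateRow_add_smul, charpoly_map]
  simp only [map_mul, Complex.ofReal_neg, map_neg]
  ring

theorem re_coeff_charpoly_mulPert (k : ℕ) :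
    ((mulPert l J).charpoly.coeff k).re = J.charpoly.coeff k := by
  have hk := congrArg (coeff · k) (charpoly_mulPert_add_map_conj l J)
  simp only [coeff_add, coeff_map, coeff_ofNat_mul, Complex.add_conj,
    Complex.ofRealHom_eq_coe] at hk
  rw [← Complex.ofReal_ofNat, ← Complex.ofReal_mul, Complex.ofReal_inj] at hk
  linarith

end MulPert

theorem Multiset.esymm_eq_zero_of_card_lt {R : Type*} [CommSemiring R] {s : Multiset R} {m : ℕ}
    (h : card s < m) : s.esymm m = 0 := by
  simp [esymm, powersetCard_eq_empty m h]

namespace Finset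

theorem esymm_map_val_one {ι R : Type*} [CommSemiring R] (s : Finset ι) (f : ι → R) :
    (s.val.map f).esymm 1 = ∑ i ∈ s, f i := by
  simp [esymm_map_val, powersetCard_one]

theorem prod_X_sub_C_coeff {ι R : Type*} [CommRing R] (s : Finset ι) (f : ι → R) {k : ℕ}
    (hk : k ≤ s.card) :
    (∏ i ∈ s, (X - C (f i))).coeff k =
      (-1) ^ (s.card - k) * (s.val.map f).esymm (s.card - k) := by
  have hmap : s.val.map (fun i => X - C (f i)) = (s.val.map f).map (fun t => X - C t) := by
    rw [Multiset.map_map]; rfl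
  rw [prod_eq_multiset_prod, hmap, Multiset.prod_X_sub_C_coeff _ (by simpa using hk),
    Multiset.card_map, card_val]

theorem sum_sum_erase_mul {ι R : Type*} [CommRing R] [DecidableEq ι] (s : Finset ι)
    (f : ι → R) :
    ∑ i ∈ s, ∑ j ∈ s.erase i, f i * f j = (∑ i ∈ s, f i) ^ 2 - ∑ i ∈ s, f i ^ 2 := by
  rw [sq, sum_mul_sum, eq_sub_iff_add_eq, ← sum_add_distrib]
  refine sum_congr rfl fun i hi => ?_
  rw [← add_sum_erase _ _ hi, sq, add_comm]

theorem sum_sum_erase_mul_eq_two_mul_esymm {ι R : Type*} [CommRing R] [Fintype ι]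
    [DecidableEq ι] (f : ι → R) :
    ∑ i, ∑ j ∈ univ.erase i, f i * f j = 2 * (univ.val.map f).esymm 2 := by
  have newton := MvPolynomial.psum_eq_mul_esymm_sub_sum ι R 2 two_pos
  rw [show {a ∈ HasAntidiagonal.antidiagonal (2 : ℕ) | a.1 ∈ Set.Ioo 0 2} = {(1, 1)} by
    decide] at newton
  have hsq := congrArg (MvPolynomial.aeval f) newton
  simp only [map_sub, map_mul, map_pow, map_neg, map_one, Nat.cast_ofNat, map_ofNat, pow_one,
    sum_singleton, map_sum, MvPolynomial.aeval_esymm_eq_multiset_esymm, MvPolynomial.psum,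
    MvPolynomial.aeval_X, esymm_map_val_one] at hsq
  rw [sum_sum_erase_mul, hsq]
  ring

end Finset

theorem re_esymm_eq_of_re_coeff {ι : Type*} [Fintype ι] {z : ι → ℂ} {lam : ι → ℝ}
    (h : ∀ k, ((∏ j, (X - C (z j))).coeff k).re = (∏ j, (X - C (lam j))).coeff k) (m : ℕ) :
    ((Finset.univ.val.map z).esymm m).re = (Finset.univ.val.map lam).esymm m := by
  rcases le_or_gt m (Fintype.card ι) with hm | hm
  · have hk := h (Fintype.card ι - m)
    rw [Finset.prod_X_sub_C_coeff _ _ (by simp), Finset.prod_X_sub_C_coeff _ _ (by simp),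
      Finset.card_univ, Nat.sub_sub_self hm, ← Complex.ofReal_one, ← Complex.ofReal_neg,
      ← Complex.ofReal_pow, Complex.re_ofReal_mul] at hk
    exact mul_left_cancel₀ (pow_ne_zero _ (neg_ne_zero.mpr one_ne_zero)) hk
  · rw [Multiset.esymm_eq_zero_of_card_lt (by simpa using hm),
      Multiset.esymm_eq_zero_of_card_lt (by simpa using hm), Complex.zero_re]

theorem stmt2_general (n : ℕ) (J : Matrix (Fin (n + 1)) (Fin (n + 1)) ℝ) (l : ℝ)
    (z : Fin (n + 1) → ℂ) (lam : Fin (n + 1) → ℝ)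
    (hz : (mulPert l J).charpoly = ∏ j, (X - C (z j)))
    (hlam : J.charpoly = ∏ j, (X - C (lam j))) :
    (∀ w : ℂ, (∏ j, (w - (lam j : ℂ))) =
        (1 / 2) * ∏ j, (w - z j) + (1 / 2) * ∏ j, (w - (starRingEnd ℂ) (z j))) ∧
    (∀ k : ℕ, (((mulPert l J).charpoly).coeff k).re = (J.charpoly).coeff k) ∧
    (∑ j, (lam j) ^ 2 =
      (∑ j, (z j).re) ^ 2 - ∑ j, ∑ k ∈ Finset.univ.erase j, (z j * z k).re) := by
  have hre := re_coeff_charpoly_mulPert l J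
  refine ⟨fun w => ?_, hre, ?_⟩
  · have hw := congrArg (eval w) (charpoly_mulPert_add_map_conj l J)
    simp only [hz, hlam, Polynomial.map_prod, Polynomial.map_sub, map_X, map_C, eval_add, eval_mul,
      eval_prod, eval_sub, eval_X, eval_C, eval_ofNat, Complex.ofRealHom_eq_coe] at hw
    linear_combination -hw / 2
  · rw [hz, hlam] at hre
    have e1 := re_esymm_eq_of_re_coeff hre 1
    have e2 := re_esymm_eq_of_re_coeff hre 2
    rw [Finset.esymm_map_val_one, Finset.esymm_map_val_one, Complex.re_sum] at e1
    calc ∑ j, lam j ^ 2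
        = (∑ j, lam j) ^ 2 - ∑ j, ∑ k ∈ Finset.univ.erase j, lam j * lam k := by
          rw [Finset.sum_sum_erase_mul]; ring
      _ = (∑ j, (z j).re) ^ 2 - (2 * (Finset.univ.val.map z).esymm 2).re := by
          rw [e1, Finset.sum_sum_erase_mul_eq_two_mul_esymm, ← e2]
          simp
      _ = (∑ j, (z j).re) ^ 2 - ∑ j, ∑ k ∈ Finset.univ.erase j, (z j * z k).re := by
          rw [← Finset.sum_sum_erase_mul_eq_two_mul_esymm]
          simp only [Complex.re_sum]

/-- with λ_j the eigenvalues of J and z_j the eigenvalues of J_{l,×}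
(with algebraic multiplicity): ∏ (z−λ_j) = ½∏(z−z_j) + ½∏(z−z̄_j) for all z ∈ ℂ;
equivalently the real parts of the coefficients of the characteristic polynomial of
J_{l,×} are the coefficients of that of J; in particular
Σ λ_j² = (Σ Re z_j)² − Σ_{j≠k} Re(z_j z_k). -/
theorem stmt2 (n : ℕ) (J : Matrix (Fin (n + 1)) (Fin (n + 1)) ℝ) (hJ : IsJacobi J) (l : ℝ)
    (z : Fin (n + 1) → ℂ) (lam : Fin (n + 1) → ℝ)
    (hz : (mulPert l J).charpoly = ∏ j, (X - C (z j)))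
    (hlam : J.charpoly = ∏ j, (X - C (lam j))) :
    (∀ w : ℂ, (∏ j, (w - (lam j : ℂ))) =
        (1 / 2) * ∏ j, (w - z j) + (1 / 2) * ∏ j, (w - (starRingEnd ℂ) (z j))) ∧
    (∀ k : ℕ, (((mulPert l J).charpoly).coeff k).re = (J.charpoly).coeff k) ∧
    (∑ j, (lam j) ^ 2 =
      (∑ j, (z j).re) ^ 2 - ∑ j, ∑ k ∈ Finset.univ.erase j, (z j * z k).re) :=
  stmt2_general n J l z lam hz hlam
end

section
/- Fix l > 0 and let J be a Jacobi matrix of order N with det J ≠ 0. Then every eigenvalue of J_{l,×} is nonreal, the eigenvalues z_1,…,z_N (with algebraic multiplicity) satisfy Σ_{j=1}^N Arg_{[0,π)} z_j = arctan l, and the number of eigenvalues of J_{l,×} lying in ℂ_+ (respectively in ℂ_−), counted with multiplicity, equals the number of positive (respectively negative) eigenvalues of J. -/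
/-!
Write `J_l` for `mulPert l J`. If `J_l u = t u` with `u ≠ 0` and `w = J u`, then `w₀ ≠ 0`,
since an eigenvector of a Jacobi matrix vanishing in the first coordinate vanishes. Pairing
with `w` gives `t ⟨u, J u⟩ = ‖w‖² + i l |w₀|²` with `⟨u, J u⟩` real, so for `l > 0` every
eigenvalue lies in the open first or third quadrant, where `Arg_{[0,π)} z = arctan (Im z / Re z)`.

For `l ≥ 0` no eigenvalue of `J_l` lies on the imaginary axis, so by continuity of the roots
in `l`, the number of eigenvalues with `Re z > 0` and `Σ arctan (Im z_j / Re z_j) - arctan l`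
are continuous on `[0, ∞)`. The first is integer valued; so is the second divided by `π`,
because `exp (2 i arctan (Im z / Re z)) = z / z̄` and `∏ z_j = det J_l = (1 + i l) det J`.
Hence both are constant, and at `l = 0` they are the number of positive eigenvalues of `J`
and `0`.
-/

open Matrix Polynomial

/-- `Arg_{[0,π)} z`. -/
noncomputable def argPi (z : ℂ) : ℝ :=
  if 0 < z.im then z.arg else if z.im < 0 then Real.pi + z.arg else 0

open Complex ComplexConjugate ComplexOrder Filter Topology

theorem Matrix.det_map_ofReal {n : Type*} [Fintype n] [DecidableEq n] (J : Matrix n n ℝ) :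
    (J.map ((↑) : ℝ → ℂ)).det = J.det :=
  (RingHom.map_det ofRealHom J).symm

theorem Matrix.exists_mulVec_eq_smul_of_isRoot_charpoly {K n : Type*} [Field K] [Fintype n]
    [DecidableEq n] {M : Matrix n n K} {t : K} (ht : M.charpoly.IsRoot t) :
    ∃ u ≠ 0, M *ᵥ u = t • u := by
  rw [IsRoot, eval_charpoly, ← exists_mulVec_eq_zero_iff] at ht
  obtain ⟨u, hu0, hu⟩ := ht
  refine ⟨u, hu0, ?_⟩
  rwa [sub_mulVec, scalar_apply, ← smul_one_eq_diagonal, smul_mulVec, one_mulVec, sub_eq_zero,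
    eq_comm] at hu

theorem Matrix.ne_zero_of_isRoot_charpoly {K n : Type*} [Field K] [Fintype n] [DecidableEq n]
    {M : Matrix n n K} (hM : M.det ≠ 0) {t : K} (ht : M.charpoly.IsRoot t) : t ≠ 0 := by
  rintro rfl
  obtain ⟨u, hu0, hu⟩ := exists_mulVec_eq_smul_of_isRoot_charpoly ht
  exact hM (exists_mulVec_eq_zero_iff.mp ⟨u, hu0, by rwa [zero_smul] at hu⟩)

theorem Matrix.continuous_charpoly_coeff {n R : Type*} [Fintype n] [DecidableEq n] [CommRing R]
    [TopologicalSpace R] [IsTopologicalRing R] (i : ℕ) :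
    Continuous fun M : Matrix n n R => M.charpoly.coeff i := by
  have h (M : Matrix n n R) : M.charpoly.coeff i
      = MvPolynomial.eval (fun ij => M ij.1 ij.2) ((charpoly.univ R n).coeff i) := by
    rw [MvPolynomial.eval, charpoly.univ_coeff_eval₂Hom]
    rfl
  simp_rw [h]
  exact (MvPolynomial.continuous_eval _).comp (by fun_prop)

theorem Polynomial.roots_finset_prod_X_sub_C {ι R : Type*} [CommRing R] [IsDomain R]
    (s : Finset ι) (f : ι → R) : (∏ i ∈ s, (X - C (f i))).roots = s.val.map f := by
  rw [Finset.prod_eq_multiset_prod, ← roots_multiset_prod_X_sub_C (s.val.map f),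
    Multiset.map_map]
  rfl

theorem Multiset.exists_map_univ_eq {α : Type*} {n : ℕ} {s : Multiset α} (hs : card s = n) :
    ∃ f : Fin n → α, Finset.univ.val.map f = s := by
  subst hs
  refine ⟨fun i => s.toList.get (i.cast (by simp)), ?_⟩
  rw [Fin.univ_val_map]
  conv_rhs => rw [← s.coe_toList]
  congr 1
  exact List.ext_get (by simp) fun _ _ _ => by simp

theorem Polynomial.Monic.norm_lt_of_isRoot {K : Type*} [NormedDivisionRing K] {p : K[X]}
    (hp : p.Monic) {C : ℝ} (hC0 : 0 ≤ C) (hC : ∀ i < p.natDegree, ‖p.coeff i‖ ≤ C)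
    {a : K} (ha : p.IsRoot a) : ‖a‖ < C + 1 := by
  have hbound := ha.norm_lt_cauchyBound hp.ne_zero
  rw [cauchyBound, hp.leadingCoeff, nnnorm_one, div_one] at hbound
  have hsup : (p.natDegree |> Finset.range).sup (‖p.coeff ·‖₊) ≤ ⟨C, hC0⟩ :=
    Finset.sup_le fun i hi => hC i (Finset.mem_range.mp hi)
  have : ‖a‖₊ < ⟨C, hC0⟩ + 1 := hbound.trans_le (add_le_add_left hsup 1)
  exact_mod_cast this

theorem Polynomial.tendsto_eval_of_tendsto_coeff {ι R : Type*} [Semiring R] [TopologicalSpace R]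
    [IsTopologicalSemiring R] {l : Filter ι} {p : ι → R[X]} {q : R[X]} {n : ℕ}
    (hp : ∀ k, (p k).natDegree < n) (hq : q.natDegree < n)
    (hcoeff : ∀ i, Tendsto (fun k => (p k).coeff i) l (𝓝 (q.coeff i))) (x : R) :
    Tendsto (fun k => (p k).eval x) l (𝓝 (q.eval x)) := by
  simp_rw [eval_eq_sum_range' (hp _), eval_eq_sum_range' hq]
  exact tendsto_finsetSum _ fun i _ => (hcoeff i).mul_const _

theorem Polynomial.roots_eq_map_of_tendsto {n : ℕ} {p : ℕ → ℂ[X]} {q : ℂ[X]}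
    {W : ℕ → Fin n → ℂ} {w : Fin n → ℂ} (hp : ∀ k, (p k).Monic) (hq : q.natDegree ≤ n)
    (hcoeff : ∀ i, Tendsto (fun k => (p k).coeff i) atTop (𝓝 (q.coeff i)))
    (hW : ∀ k, (p k).roots = Finset.univ.val.map (W k)) (hlim : Tendsto W atTop (𝓝 w)) :
    q.roots = Finset.univ.val.map w := by
  have hdeg : ∀ k, (p k).natDegree = n := fun k => by
    rw [← IsAlgClosed.card_roots_eq_natDegree, hW, Multiset.card_map, Finset.card_val,
      Finset.card_univ, Fintype.card_fin]
  have hevalW : ∀ k r, (p k).eval r = ∏ i, (r - W k i) := fun k r => by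
    rw [(IsAlgClosed.splits _).eval_eq_prod_roots_of_monic (hp k), hW, Multiset.map_map]
    rfl
  suffices hq' : q = ((Finset.univ.val.map w).map (X - C ·)).prod by
    rw [hq', roots_multiset_prod_X_sub_C]
  refine Polynomial.funext fun r => tendsto_nhds_unique
    (tendsto_eval_of_tendsto_coeff (n := n + 1) (fun k => (hdeg k).trans_lt n.lt_succ_self)
      (Nat.lt_succ_of_le hq) hcoeff r) ?_
  simp_rw [hevalW, eval_multiset_prod, Multiset.map_map]
  exact tendsto_finsetProd _ fun i _ => by
    simpa using tendsto_const_nhds.sub ((continuous_apply i).tendsto _ |>.comp hlim)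

theorem Polynomial.tendsto_sum_map_roots {ι α : Type*} [AddCommMonoid α] [TopologicalSpace α]
    [ContinuousAdd α] {l : Filter ι} [l.IsCountablyGenerated] {n : ℕ} {p : ι → ℂ[X]}
    {q : ℂ[X]} (hp : ∀ k, (p k).Monic ∧ (p k).natDegree = n) (hq : q.natDegree ≤ n)
    (hcoeff : ∀ i, Tendsto (fun k => (p k).coeff i) l (𝓝 (q.coeff i))) {f : ℂ → α}
    (hf : ∀ z ∈ q.roots, ContinuousAt f z) :
    Tendsto (fun k => ((p k).roots.map f).sum) l (𝓝 ((q.roots.map f).sum)) := by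
  -- along any subsequence, label the roots, bound them by Cauchy's bound, and extract a
  -- convergent sequence of labelings
  refine tendsto_of_subseq_tendsto fun ns hns => ?_
  obtain ⟨B, hB⟩ :=
    (tendsto_pi_nhds.mpr fun i : Fin n => (hcoeff i).comp hns).norm.bddAbove_range
  have hB0 : 0 ≤ B := (norm_nonneg _).trans (hB ⟨0, rfl⟩)
  choose W hW using fun k => Multiset.exists_map_univ_eq
    ((IsAlgClosed.card_roots_eq_natDegree).trans (hp (ns k)).2)
  have hWB : ∀ k, W k ∈ Metric.closedBall 0 (B + 1) := fun k => by
    refine mem_closedBall_zero_iff.mpr <|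
      (pi_norm_le_iff_of_nonneg (by positivity)).mpr fun i => ?_
    refine ((hp (ns k)).1.norm_lt_of_isRoot hB0 (fun j hj => ?_) ?_).le
    · exact (norm_le_pi_norm (fun i : Fin n => (p (ns k)).coeff i)
        ⟨j, (hp (ns k)).2 ▸ hj⟩).trans (hB ⟨k, rfl⟩)
    · exact isRoot_of_mem_roots (hW k ▸ Multiset.mem_map_of_mem _ (Finset.mem_univ i))
  obtain ⟨w, -, φ, hφ, hlim⟩ := (isCompact_closedBall _ _).tendsto_subseq hWB
  have hqw := roots_eq_map_of_tendsto (fun k => (hp (ns (φ k))).1) hq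
    (fun i => (hcoeff i).comp (hns.comp hφ.tendsto_atTop)) (fun k => (hW (φ k)).symm) hlim
  refine ⟨φ, ?_⟩
  simp_rw [← hW, hqw, Multiset.map_map]
  exact tendsto_finsetSum _ fun i _ =>
    (hf (w i) (hqw ▸ Multiset.mem_map_of_mem _ (Finset.mem_univ i))).tendsto.comp
      ((continuous_apply i).tendsto _ |>.comp hlim)

/-- Agrees with `argPi` on the open first and third quadrants (`argPi_eq_arctanSlope`) but,
unlike `argPi`, is continuous at every point off the imaginary axis. -/
noncomputable def arctanSlope (z : ℂ) : ℝ := Real.arctan (z.im / z.re)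

theorem arg_eq_arctanSlope {z : ℂ} (hz : 0 < z.re) : arg z = arctanSlope z := by
  obtain ⟨h₁, h₂⟩ := abs_lt.mp (abs_arg_lt_pi_div_two_iff.mpr (Or.inl hz))
  rw [arctanSlope, ← tan_arg, Real.arctan_tan h₁ h₂]

theorem argPi_eq_arctanSlope {z : ℂ} (hz : 0 < z.re * z.im) : argPi z = arctanSlope z := by
  rcases (right_ne_zero_of_mul hz.ne').lt_or_gt with him | him
  · have hre : 0 < (-z).re := by rw [neg_re]; nlinarith
    rw [argPi, if_neg him.not_gt, if_pos him, add_comm, ← arg_neg_eq_arg_add_pi_of_im_neg him,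
      arg_eq_arctanSlope hre, arctanSlope, arctanSlope, neg_im, neg_re, neg_div_neg_eq]
  · rw [argPi, if_pos him, arg_eq_arctanSlope (pos_of_mul_pos_left hz him.le)]

theorem exp_two_mul_arctan_mul_I (t : ℝ) :
    exp (2 * Real.arctan t * I) = (1 + t * I) / (1 - t * I) := by
  have h₁ : (1 : ℂ) + t * I ≠ 0 := fun h => by simpa using congrArg re h
  have h₂ : (1 : ℂ) - t * I ≠ 0 := fun h => by simpa using congrArg re h
  rw [ofReal_arctan, Complex.arctan, show 2 * (-I / 2 * log ((1 + t * I) / (1 - t * I))) * I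
      = -(I * I) * log ((1 + t * I) / (1 - t * I)) by ring, I_mul_I, neg_neg, one_mul,
    exp_log (div_ne_zero h₁ h₂)]

theorem exp_two_mul_arctanSlope_mul_I {z : ℂ} (hz : z.re ≠ 0) :
    exp (2 * arctanSlope z * I) = z / conj z := by
  rw [arctanSlope, exp_two_mul_arctan_mul_I, ← mul_div_mul_left _ _ (ofReal_ne_zero.mpr hz)]
  congr 1 <;> apply Complex.ext <;> simp [mul_div_cancel₀ _ hz]

theorem exp_two_mul_sum_arctanSlope_mul_I {s : Multiset ℂ} (hs : ∀ z ∈ s, z.re ≠ 0) :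
    exp (2 * (s.map arctanSlope).sum * I) = s.prod / conj s.prod := by
  induction s using Multiset.induction_on with
  | empty => simp
  | cons a s ih =>
    simp only [Multiset.mem_cons, forall_eq_or_imp] at hs
    rw [Multiset.map_cons, Multiset.sum_cons, ofReal_add, mul_add, add_mul, exp_add,
      exp_two_mul_arctanSlope_mul_I hs.1, ih hs.2, Multiset.prod_cons, map_mul, mul_div_mul_comm]

theorem sub_mem_zmultiples_pi_of_exp_eq {x y : ℝ} (h : exp (2 * x * I) = exp (2 * y * I)) :
    x - y ∈ AddSubgroup.zmultiples Real.pi := by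
  rw [← div_eq_one_iff_eq (exp_ne_zero _), ← exp_sub, exp_eq_one_iff] at h
  obtain ⟨n, hn⟩ := h
  have hn' : 2 * x - 2 * y = n * (2 * Real.pi) := by simpa using congrArg im hn
  exact ⟨n, by simp only [zsmul_eq_mul]; linarith⟩

theorem continuousAt_arctanSlope {z : ℂ} (hz : z.re ≠ 0) : ContinuousAt arctanSlope z :=
  Real.continuous_arctan.continuousAt.comp <|
    continuous_im.continuousAt.div continuous_re.continuousAt hz

theorem continuousAt_ite_re_pos {α : Type*} [TopologicalSpace α] (a b : α) {z : ℂ}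
    (hz : z.re ≠ 0) : ContinuousAt (fun w : ℂ => if 0 < w.re then a else b) z := by
  rcases hz.lt_or_gt with h | h
  · exact continuousAt_const.congr <| (continuous_re.continuousAt.eventually (gt_mem_nhds h)).mono
      fun w hw => (if_neg hw.not_gt).symm
  · exact continuousAt_const.congr <| (continuous_re.continuousAt.eventually (lt_mem_nhds h)).mono
      fun w hw => (if_pos hw).symm

theorem Matrix.IsHermitian.re_mul_im_pos_of_mulVec_add_single_eq_smul {n : Type*} [Fintype n]
    [DecidableEq n] {A : Matrix n n ℂ} (hA : A.IsHermitian) {i : n} {l : ℝ} (hl : 0 < l) {t : ℂ}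
    {u : n → ℂ} (hu : A *ᵥ u + (I * l) • Pi.single i ((A *ᵥ u) i) = t • u)
    (hi : (A *ᵥ u) i ≠ 0) : 0 < t.re * t.im := by
  set w := A *ᵥ u
  -- `w* u = u* A u` is real, while `t (w* u) = w* w + i l |wᵢ|²`
  have hβ : (star w ⬝ᵥ u).im = 0 := by
    have h : star w ⬝ᵥ u = star u ⬝ᵥ w := by
      rw [star_mulVec, hA.eq, dotProduct_mulVec]
    have := congrArg im (h.trans (star_dotProduct u w))
    simp only [star_def, conj_im] at this
    linarith
  have key : t * (star w ⬝ᵥ u) = star w ⬝ᵥ w + I * l * (star (w i) * w i) := by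
    rw [← smul_eq_mul, ← dotProduct_smul, ← hu, dotProduct_add, dotProduct_smul,
      dotProduct_single, smul_eq_mul, Pi.star_apply]
  obtain ⟨hγ, hγ'⟩ := pos_iff.mp (dotProduct_star_self_pos_iff (v := w) |>.mpr
    fun h => hi (by rw [h]; rfl))
  have hδ : 0 < normSq (w i) := normSq_pos.mpr hi
  rw [star_def, ← normSq_eq_conj_mul_self] at key
  have hre := congrArg re key
  have him := congrArg im key
  simp only [mul_re, mul_im, add_re, add_im, I_re, I_im, ofReal_re, ofReal_im, hβ] at hre him
  have hprod :
      t.re * t.im * (star w ⬝ᵥ u).re ^ 2 = (star w ⬝ᵥ w).re * (l * normSq (w i)) := by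
    linear_combination
      (t.im * (star w ⬝ᵥ u).re) * hre + (star w ⬝ᵥ w).re * him - (star w ⬝ᵥ w).re * hγ'
  exact pos_of_mul_pos_left (hprod ▸ mul_pos hγ (mul_pos hl hδ)) (sq_nonneg _)

section Jacobi

variable {N : ℕ} {J : Matrix (Fin (N + 1)) (Fin (N + 1)) ℝ}

theorem IsJacobi.eq_zero_of_mulVec_eq_smul (hJ : IsJacobi J) {z : ℂ} {v : Fin (N + 1) → ℂ}
    (hv : J.map (↑) *ᵥ v = z • v) (h0 : v 0 = 0) : v = 0 := by
  obtain ⟨-, hzero, hpos⟩ := hJ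
  suffices h : ∀ m : Fin (N + 1), ∀ j ≤ m, v j = 0 from funext fun j => h j j le_rfl
  refine Fin.induction (fun j hj => by rwa [nonpos_iff_eq_zero.mp hj]) fun m ih j hj => ?_
  rcases hj.lt_or_eq with hj | rfl
  · exact ih j (Fin.le_castSucc_iff.mpr hj)
  -- row `m` of `J v = z v` reduces to `J m (m + 1) * v (m + 1) = 0`
  have hrow : (J.map (↑) *ᵥ v) m.castSucc = J m.castSucc m.succ * v m.succ := by
    refine Finset.sum_eq_single_of_mem m.succ (Finset.mem_univ _) fun j _ hj => ?_
    rcases lt_or_gt_of_ne hj with hlt | hgt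
    · rw [ih j (Fin.le_castSucc_iff.mpr hlt), mul_zero]
    · simp [hzero m.castSucc j (by simp [Fin.lt_def] at hgt ⊢; omega)]
  have hsup : (J m.castSucc m.succ : ℂ) ≠ 0 := ofReal_ne_zero.mpr (hpos _ _ (by simp)).ne'
  rw [hv, Pi.smul_apply, ih _ le_rfl, smul_zero] at hrow
  exact (mul_eq_zero.mp hrow.symm).resolve_left hsup

theorem IsJacobi.isHermitian_map (hJ : IsJacobi J) : (J.map ((↑) : ℝ → ℂ)).IsHermitian := by
  ext i j
  simp [hJ.1 i j]

end Jacobi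

section mulPert

variable {N : ℕ} (l : ℝ) (J : Matrix (Fin (N + 1)) (Fin (N + 1)) ℝ)

theorem mulPert_mulVec (u : Fin (N + 1) → ℂ) :
    mulPert l J *ᵥ u = J.map (↑) *ᵥ u + (I * l) • Pi.single 0 ((J.map (↑) *ᵥ u) 0) := by
  rw [mulPert, ← mulVec_mulVec, add_mulVec, one_mulVec, smul_mulVec, single_mulVec_eq,
    one_mul, ← Pi.single_smul', smul_eq_mul, mul_one]

theorem det_mulPert : (mulPert l J).det = (1 + I * l) * J.det := by
  rw [mulPert, det_mul, smul_single, smul_eq_mul, mul_one, ← diagonal_single, ← diagonal_one,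
    diagonal_add, det_diagonal, Fin.prod_univ_succ]
  simp [det_map_ofReal]

theorem det_mulPert_ne_zero (hdet : J.det ≠ 0) : (mulPert l J).det ≠ 0 := by
  rw [det_mulPert]
  exact mul_ne_zero (fun h => by simpa using congrArg re h) (ofReal_ne_zero.mpr hdet)

theorem mulPert_zero : mulPert 0 J = J.map (↑) := by
  simp [mulPert]

theorem continuous_mulPert : Continuous fun l : ℝ => mulPert l J := by
  unfold mulPert
  fun_prop

end mulPert

section Spectrum

variable {N : ℕ} {J : Matrix (Fin (N + 1)) (Fin (N + 1)) ℝ} {lam : Fin (N + 1) → ℝ}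

theorem IsJacobi.re_mul_im_pos_of_mem_roots_mulPert (hJ : IsJacobi J) (hdet : J.det ≠ 0)
    {l : ℝ} (hl : 0 < l) {t : ℂ} (ht : t ∈ (mulPert l J).charpoly.roots) :
    0 < t.re * t.im := by
  have ht0 := ne_zero_of_isRoot_charpoly (det_mulPert_ne_zero l J hdet) (isRoot_of_mem_roots ht)
  obtain ⟨u, hu0, hu⟩ := exists_mulVec_eq_smul_of_isRoot_charpoly (isRoot_of_mem_roots ht)
  rw [mulPert_mulVec] at hu
  refine hJ.isHermitian_map.re_mul_im_pos_of_mulVec_add_single_eq_smul hl hu fun h0 => hu0 ?_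
  rw [h0, Pi.single_zero, smul_zero, add_zero] at hu
  refine hJ.eq_zero_of_mulVec_eq_smul hu ?_
  simpa [ht0, hu] using h0

theorem roots_charpoly_mulPert_zero (hlam : J.charpoly = ∏ j, (X - C (lam j))) :
    (mulPert 0 J).charpoly.roots = Finset.univ.val.map fun j => (lam j : ℂ) := by
  have hmap : (J.map ((↑) : ℝ → ℂ)).charpoly = J.charpoly.map ofRealHom :=
    J.charpoly_map ofRealHom
  rw [mulPert_zero, hmap, hlam, Polynomial.map_prod]
  simp_rw [Polynomial.map_sub, map_X, map_C]
  exact roots_finset_prod_X_sub_C _ _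

theorem IsJacobi.re_ne_zero_of_mem_roots_mulPert (hJ : IsJacobi J) (hdet : J.det ≠ 0)
    (hlam : J.charpoly = ∏ j, (X - C (lam j))) {l : ℝ} (hl : 0 ≤ l) {z : ℂ}
    (hz : z ∈ (mulPert l J).charpoly.roots) : z.re ≠ 0 := by
  rcases hl.lt_or_eq with hl | rfl
  · exact left_ne_zero_of_mul (hJ.re_mul_im_pos_of_mem_roots_mulPert hdet hl hz).ne'
  have hz0 := ne_zero_of_isRoot_charpoly (det_mulPert_ne_zero 0 J hdet) (isRoot_of_mem_roots hz)
  rw [roots_charpoly_mulPert_zero hlam] at hz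
  obtain ⟨j, -, rfl⟩ := Multiset.mem_map.mp hz
  simpa using hz0

theorem IsJacobi.continuousOn_sum_map_roots_mulPert {α : Type*} [AddCommMonoid α]
    [TopologicalSpace α] [ContinuousAdd α] (hJ : IsJacobi J) (hdet : J.det ≠ 0)
    (hlam : J.charpoly = ∏ j, (X - C (lam j))) {f : ℂ → α}
    (hf : ∀ z : ℂ, z.re ≠ 0 → ContinuousAt f z) :
    ContinuousOn (fun l => ((mulPert l J).charpoly.roots.map f).sum) (Set.Ici 0) := by
  have hp (l : ℝ) : (mulPert l J).charpoly.Monic ∧ (mulPert l J).charpoly.natDegree = N + 1 :=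
    ⟨charpoly_monic _, by rw [charpoly_natDegree_eq_dim, Fintype.card_fin]⟩
  refine fun l₀ hl₀ => ContinuousAt.continuousWithinAt <| tendsto_sum_map_roots hp (hp l₀).2.le
    (fun i => ((continuous_charpoly_coeff i).comp (continuous_mulPert J)).continuousAt)
    fun z hz => hf z (hJ.re_ne_zero_of_mem_roots_mulPert hdet hlam hl₀ hz)

theorem sum_map_arctanSlope_roots_mulPert_sub_arctan_mem (hdet : J.det ≠ 0) {l : ℝ}
    (hroots : ∀ z ∈ (mulPert l J).charpoly.roots, z.re ≠ 0) :
    ((mulPert l J).charpoly.roots.map arctanSlope).sum - Real.arctan l ∈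
      AddSubgroup.zmultiples Real.pi := by
  apply sub_mem_zmultiples_pi_of_exp_eq
  rw [exp_two_mul_sum_arctanSlope_mul_I hroots, ← det_eq_prod_roots_charpoly, det_mulPert,
    exp_two_mul_arctan_mul_I, map_mul, conj_ofReal,
    mul_div_mul_right _ _ (ofReal_ne_zero.mpr hdet)]
  congr 1 <;> simp [mul_comm, sub_eq_add_neg]

theorem IsJacobi.sum_map_arctanSlope_roots_mulPert (hJ : IsJacobi J) (hdet : J.det ≠ 0)
    (hlam : J.charpoly = ∏ j, (X - C (lam j))) {l : ℝ} (hl : 0 ≤ l) :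
    ((mulPert l J).charpoly.roots.map arctanSlope).sum = Real.arctan l := by
  have hconst := isPreconnected_Ici.constant_of_mapsTo
    (isDiscrete_iff_discreteTopology.mpr (inferInstance :
      DiscreteTopology (AddSubgroup.zmultiples Real.pi)))
    ((hJ.continuousOn_sum_map_roots_mulPert hdet hlam fun _ => continuousAt_arctanSlope).sub
      Real.continuous_arctan.continuousOn)
    (fun l hl => sum_map_arctanSlope_roots_mulPert_sub_arctan_mem hdet
      fun _ => hJ.re_ne_zero_of_mem_roots_mulPert hdet hlam hl) hl Set.self_mem_Ici
  simp only [Pi.sub_apply, roots_charpoly_mulPert_zero hlam, Multiset.map_map, Function.comp_def,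
    arctanSlope, ofReal_im, zero_div, Real.arctan_zero] at hconst
  simpa [sub_eq_zero] using hconst

theorem IsJacobi.card_filter_re_pos_eq (hJ : IsJacobi J) (hdet : J.det ≠ 0)
    (hlam : J.charpoly = ∏ j, (X - C (lam j))) {l : ℝ} (hl : 0 ≤ l) {z : Fin (N + 1) → ℂ}
    (hz : (mulPert l J).charpoly.roots = Finset.univ.val.map z) :
    (Finset.univ.filter fun j => 0 < (z j).re).card =
      (Finset.univ.filter fun j => 0 < lam j).card := by
  have hconst := isPreconnected_Ici.constant
    (hJ.continuousOn_sum_map_roots_mulPert hdet hlam fun _ => continuousAt_ite_re_pos 1 0) hl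
    Set.self_mem_Ici
  rw [hz, roots_charpoly_mulPert_zero hlam, Multiset.map_map, Multiset.map_map] at hconst
  change ∑ j, (if 0 < (z j).re then 1 else 0) = ∑ j, (if 0 < lam j then 1 else 0) at hconst
  simpa only [Finset.sum_boole, Nat.cast_id] using hconst

end Spectrum

theorem Finset.card_filter_neg_eq_card_sub_card_filter_pos {ι α : Type*} [Fintype ι]
    [LinearOrder α] [Zero α] {x : ι → α} (hx : ∀ j, x j ≠ 0) :
    (Finset.univ.filter fun j => x j < 0).card =
      Fintype.card ι - (Finset.univ.filter fun j => 0 < x j).card := by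
  have hsplit := card_filter_add_card_filter_not (s := univ) fun j => 0 < x j
  rw [filter_congr fun j _ => not_lt.trans (hx j).le_iff_lt, card_univ] at hsplit
  omega

/-- for l > 0 and a Jacobi matrix J with det J ≠ 0, all eigenvalues of
J_{l,×} are nonreal, Σ Arg_{[0,π)} z_j = arctan l, and the number of eigenvalues of
J_{l,×} in ℂ₊ (resp. ℂ₋), with multiplicity, equals the number of positive
(resp. negative) eigenvalues of J. -/
theorem stmt3 (N : ℕ) (l : ℝ) (hl : 0 < l) (J : Matrix (Fin (N + 1)) (Fin (N + 1)) ℝ)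
    (hJ : IsJacobi J) (hdet : J.det ≠ 0)
    (z : Fin (N + 1) → ℂ) (hz : (mulPert l J).charpoly = ∏ j, (X - C (z j)))
    (lam : Fin (N + 1) → ℝ) (hlam : J.charpoly = ∏ j, (X - C (lam j))) :
    (∀ j, (z j).im ≠ 0) ∧
    (∑ j, argPi (z j) = Real.arctan l) ∧
    ((Finset.univ.filter fun j => 0 < (z j).im).card =
      (Finset.univ.filter fun j => 0 < lam j).card) ∧
    ((Finset.univ.filter fun j => (z j).im < 0).card =
      (Finset.univ.filter fun j => lam j < 0).card) := by
  have hroots : (mulPert l J).charpoly.roots = Finset.univ.val.map z := by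
    rw [hz, roots_finset_prod_X_sub_C]
  have hquad (j) : 0 < (z j).re * (z j).im := hJ.re_mul_im_pos_of_mem_roots_mulPert hdet hl
    (hroots ▸ Multiset.mem_map_of_mem _ (Finset.mem_univ j))
  have him (j) : (z j).im ≠ 0 := right_ne_zero_of_mul (hquad j).ne'
  have hlam0 (j) : lam j ≠ 0 := by
    refine ne_zero_of_isRoot_charpoly hdet (isRoot_of_mem_roots ?_)
    rw [hlam, roots_finset_prod_X_sub_C]
    exact Multiset.mem_map_of_mem _ (Finset.mem_univ j)
  have hpos : (Finset.univ.filter fun j => 0 < (z j).im).card =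
      (Finset.univ.filter fun j => 0 < lam j).card := by
    rw [← hJ.card_filter_re_pos_eq hdet hlam hl.le hroots]
    exact congrArg _ (Finset.filter_congr fun j _ => (pos_iff_pos_of_mul_pos (hquad j)).symm)
  refine ⟨him, ?_, hpos, ?_⟩
  · rw [Finset.sum_congr rfl fun j _ => argPi_eq_arctanSlope (hquad j),
      ← hJ.sum_map_arctanSlope_roots_mulPert hdet hlam hl.le, hroots, Multiset.map_map]
    rfl
  · rw [Finset.card_filter_neg_eq_card_sub_card_filter_pos him,
      Finset.card_filter_neg_eq_card_sub_card_filter_pos hlam0, hpos]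
end

section
/- Fix distinct real numbers λ_1,…,λ_n. On the open simplex U = {(w_1,…,w_{n−1}) ∈ ℝ^{n−1} : w_j > 0, Σ_{j=1}^{n−1} w_j < 1}, set w_n := 1 − Σ_{j=1}^{n−1} w_j and let q(z) = Σ_{j=0}^{n−1} q_j z^j (with q_{n−1} = 1) be defined by q(z) := Σ_{j=1}^n w_j ∏_{k≠j} (z − λ_k). Then the map (w_1,…,w_{n−1}) ↦ (q_0,…,q_{n−2}) is differentiable on U and the absolute value of the determinant of its Jacobian matrix equals ∏_{1≤j<k≤n} |λ_j − λ_k| at every point of U. -/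
/-!
The map is affine in the weights. Writing `P j = ∏_{k ≠ j} (X - λ_k)`, its linear part has as
columns the coefficient vectors of `P j - P n`, truncated to degrees `< n - 1`. Since every `P j`
is monic of degree `n - 1`, the determinant of this matrix equals that of the full coefficient
matrix `M` of the `P j`. Multiplying by the Vandermonde matrix `V` of the nodes turns `M` into
the diagonal matrix of the values `P j (λ_j) = ∏_{k ≠ j} (λ_j - λ_k)`, whose determinant has
absolute value `|det V| ^ 2`; hence `|det M| = |det V| = ∏_{j < k} |λ_j - λ_k|`.
-/

open Polynomial

/-- The map from weights (w₁,…,w_{n−1}) on the open simplex to the lower coefficients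
(q₀,…,q_{n−2}) of q(z) = Σ_j w_j ∏_{k≠j} (z−λ_k), where w_n := 1 − Σ_{j<n} w_j. -/
noncomputable def weightsToCoeffs {m : ℕ} (lam : Fin (m + 1) → ℝ) (v : Fin m → ℝ)
    (i : Fin m) : ℝ :=
  (∑ j, C (Fin.snoc v (1 - ∑ k, v k) j) *
      ∏ k ∈ Finset.univ.erase j, (X - C (lam k))).coeff (i : ℕ)

open Finset Lagrange Matrix

section Products

variable {ι M : Type*} [Fintype ι] [LinearOrder ι] [LocallyFiniteOrderTop ι] [CommMonoid M]

theorem prod_prod_erase_eq_sq_of_symm [LocallyFiniteOrderBot ι] (g : ι → ι → M)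
    (hg : ∀ j k, g j k = g k j) :
    ∏ j, ∏ k ∈ univ.erase j, g j k = (∏ j, ∏ k ∈ Ioi j, g j k) ^ 2 := by
  have hsplit (j : ι) : ∏ k ∈ univ.erase j, g j k =
      (∏ k ∈ Ioi j, g j k) * ∏ k ∈ Iio j, g k j := by
    rw [← compl_singleton, ← Ioi_disjUnion_Iio, prod_disjUnion]
    simp_rw [hg j]
  rw [prod_congr rfl fun j _ => hsplit j, prod_mul_distrib, sq,
    prod_comm' (t := Iio) (t' := univ) (s' := Ioi) (by simp)]

theorem prod_filter_lt_eq_prod_prod_Ioi (f : ι → ι → M) :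
    ∏ p ∈ univ.filter (fun p : ι × ι => p.1 < p.2), f p.1 p.2 = ∏ i, ∏ j ∈ Ioi i, f i j :=
  prod_finset_product' _ _ _ (by simp)

end Products

section NodalCoeffs

variable {R : Type*} [CommRing R] {n : ℕ}

noncomputable def nodalCoeffMatrix (v : Fin n → R) : Matrix (Fin n) (Fin n) R :=
  of fun i j => (nodal (univ.erase j) v).coeff i

theorem vandermonde_mul_nodalCoeffMatrix [Nontrivial R] (v : Fin n → R) :
    vandermonde v * nodalCoeffMatrix v =
      diagonal fun j => ∏ k ∈ univ.erase j, (v j - v k) := by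
  ext i j
  have hdeg : (nodal (univ.erase j) v).natDegree < n := by
    rw [natDegree_nodal, card_erase_of_mem (mem_univ j), card_univ, Fintype.card_fin]
    exact Nat.sub_one_lt_of_lt j.pos
  have heval :
      (vandermonde v * nodalCoeffMatrix v) i j = (nodal (univ.erase j) v).eval (v i) := by
    rw [eval_eq_sum_range' hdeg, ← Fin.sum_univ_eq_sum_range, mul_apply]
    simp [nodalCoeffMatrix, vandermonde_apply, mul_comm]
  rw [heval]
  rcases eq_or_ne i j with rfl | hij
  · simp [eval_nodal]
  · rw [diagonal_apply_ne _ hij, eval_nodal_at_node (mem_erase.2 ⟨hij, mem_univ i⟩)]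

theorem nodalCoeffMatrix_last_row [Nontrivial R] (v : Fin (n + 1) → R) (j : Fin (n + 1)) :
    nodalCoeffMatrix v (Fin.last n) j = 1 := by
  have hdeg : (nodal (univ.erase j) v).natDegree = n := by simp [natDegree_nodal]
  simpa [nodalCoeffMatrix, hdeg] using (nodal_monic (s := univ.erase j) (v := v)).coeff_natDegree

theorem abs_det_nodalCoeffMatrix {K : Type*} [Field K] [LinearOrder K] [IsStrictOrderedRing K]
    {v : Fin n → K} (hv : Function.Injective v) :
    |(nodalCoeffMatrix v).det| = ∏ i, ∏ j ∈ Ioi i, |v i - v j| := by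
  have hV : |(vandermonde v).det| = ∏ i, ∏ j ∈ Ioi i, |v i - v j| := by
    simp_rw [det_vandermonde, abs_prod, abs_sub_comm]
  have hpos : 0 < ∏ i, ∏ j ∈ Ioi i, |v i - v j| :=
    prod_pos fun i _ => prod_pos fun j hj =>
      abs_pos.2 (sub_ne_zero.2 (hv.ne (mem_Ioi.1 hj).ne))
  have hmul := congrArg (fun x => |det x|) (vandermonde_mul_nodalCoeffMatrix v)
  simp only [det_mul, abs_mul, det_diagonal, abs_prod, hV] at hmul
  rw [prod_prod_erase_eq_sq_of_symm _ fun j k => abs_sub_comm _ _, sq] at hmul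
  exact mul_left_cancel₀ hpos.ne' hmul

end NodalCoeffs

section LastColumn

variable {R : Type*} [CommRing R] {m : ℕ}

def lastColReduction (M : Matrix (Fin (m + 1)) (Fin (m + 1)) R) : Matrix (Fin m) (Fin m) R :=
  of fun i j => M i.castSucc j.castSucc - M i.castSucc (Fin.last m)

theorem det_lastColReduction {M : Matrix (Fin (m + 1)) (Fin (m + 1)) R}
    (hM : ∀ j, M (Fin.last m) j = 1) : (lastColReduction M).det = M.det := by
  -- subtracting the last column from the others leaves `(0, …, 0, 1)` as the last row
  set N : Matrix (Fin (m + 1)) (Fin (m + 1)) R :=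
    of fun i j => if j = Fin.last m then M i j else M i j - M i (Fin.last m) with hN
  have hNM : N.det = M.det := by
    rw [← det_transpose N, ← det_transpose M]
    refine det_eq_of_forall_row_eq_smul_add_const (fun j => if j = Fin.last m then 0 else -1)
      (Fin.last m) (by simp) fun j i => ?_
    by_cases hj : j = Fin.last m <;> simp [hN, hj, sub_eq_add_neg]
  have hNlast (j : Fin (m + 1)) (hj : j ≠ Fin.last m) : N (Fin.last m) j = 0 := by
    simp [hN, hj, hM]
  rw [← hNM, det_succ_row N (Fin.last m), sum_eq_single (Fin.last m)
    (fun j _ hj => by rw [hNlast j hj, mul_zero, zero_mul]) (by simp)]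
  have hsub :
      N.submatrix (Fin.last m).succAbove (Fin.last m).succAbove = lastColReduction M := by
    ext i j
    simp [hN, lastColReduction, (Fin.castSucc_lt_last j).ne]
  rw [hsub]
  simp [hN, hM]

end LastColumn

theorem weightsToCoeffs_eq_mulVec_add {m : ℕ} (lam : Fin (m + 1) → ℝ) :
    weightsToCoeffs lam = fun v => lastColReduction (nodalCoeffMatrix lam) *ᵥ v +
      fun i => nodalCoeffMatrix lam i.castSucc (Fin.last m) := by
  ext v i
  simp only [weightsToCoeffs, Fin.sum_univ_castSucc, Fin.snoc_castSucc, Fin.snoc_last,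
    coeff_add, finsetSum_coeff, coeff_C_mul, Pi.add_apply, mulVec, dotProduct,
    lastColReduction, nodalCoeffMatrix, of_apply, nodal, Fin.val_castSucc]
  simp only [sub_mul, one_mul, sum_mul, sum_sub_distrib, mul_comm (v _)]
  ring

theorem stmt7_general (m : ℕ) (lam : Fin (m + 1) → ℝ) (hlam : Function.Injective lam)
    (w : Fin m → ℝ) :
    DifferentiableAt ℝ (weightsToCoeffs lam) w ∧
    |LinearMap.det ((fderiv ℝ (weightsToCoeffs lam) w).toLinearMap)| =
      ∏ p ∈ Finset.univ.filter (fun p : Fin (m + 1) × Fin (m + 1) => p.1 < p.2),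
        |lam p.1 - lam p.2| := by
  set A := lastColReduction (nodalCoeffMatrix lam)
  have hderiv : HasFDerivAt (weightsToCoeffs lam)
      (LinearMap.toContinuousLinearMap (toLin' A)) w := by
    rw [weightsToCoeffs_eq_mulVec_add]
    exact (LinearMap.toContinuousLinearMap (toLin' A)).hasFDerivAt.add_const _
  refine ⟨hderiv.differentiableAt, ?_⟩
  rw [hderiv.fderiv, LinearMap.coe_toContinuousLinearMap, LinearMap.det_toLin',
    det_lastColReduction (nodalCoeffMatrix_last_row lam), abs_det_nodalCoeffMatrix hlam]
  exact (prod_filter_lt_eq_prod_prod_Ioi fun i j => |lam i - lam j|).symm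

/-- for fixed distinct reals λ₁,…,λ_n (n = m+1), the map
(w₁,…,w_{n−1}) ↦ (q₀,…,q_{n−2}) is differentiable on the open simplex and the absolute
value of its Jacobian determinant there equals ∏_{j<k} |λ_j − λ_k|. -/
theorem stmt7 (m : ℕ) (lam : Fin (m + 1) → ℝ) (hlam : Function.Injective lam)
    (w : Fin m → ℝ) (hw : ∀ j, 0 < w j) (hw1 : ∑ j, w j < 1) :
    DifferentiableAt ℝ (weightsToCoeffs lam) w ∧
    |LinearMap.det ((fderiv ℝ (weightsToCoeffs lam) w).toLinearMap)| =
      ∏ p ∈ Finset.univ.filter (fun p : Fin (m + 1) × Fin (m + 1) => p.1 < p.2),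
        |lam p.1 - lam p.2| :=
  stmt7_general m lam hlam w
end

section
/- Fix n ≥ 1 and let U ⊂ ℝ^{2n} be the open set of points (λ_1,…,λ_n, w_1,…,w_{n−1}, l) with λ_1,…,λ_n distinct and all nonzero, w_j > 0, Σ_{j=1}^{n−1} w_j < 1, and l > 0. With w_n := 1 − Σ_{j=1}^{n−1} w_j, p(z) := ∏_{j=1}^n (z−λ_j), q(z) := Σ_{j=1}^n w_j ∏_{k≠j}(z−λ_k), define κ_0,…,κ_{n−1} ∈ ℂ by (1+il)p(z) − i l z q(z) = z^n + Σ_{j=0}^{n−1} κ_j z^j. Then the map Φ: U → ℝ^{2n}, Φ = (Re κ_0,…,Re κ_{n−1}, Im κ_0,…,Im κ_{n−1}), is differentiable and |det DΦ| = l^{n−1} · |∏_{j=1}^n λ_j| · ∏_{1≤j<k≤n} |λ_j − λ_k|² at every point of U. -/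
/-!
Since `(1 + i l) p - i l X q = p + i l r` with `r = p - X q`, the map is
`(λ, w, l) ↦ (coefficients of p, l • coefficients of r)`, whose first component depends on `λ`
only, so the Jacobian is block triangular. Moving `λ_k` moves `p` at rate `-π_k`, where
`π_k = ∏_{j ≠ k} (X - λ_j)`, so the first block is `-N` for the coefficient matrix `N` of the
`π_k`. Moving `w_k` moves `l r` at rate `-l X (π_k - π_n)` and moving `l` at rate `r`, so the
constant-term row of the second block is `(0, …, 0, r(0))` with `r(0) = p(0) = ∏ (-λ_j)`, and the
complementary minor is `-l` times the coefficient matrix of the `π_k - π_n`, whose determinant is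
`det N` because all `π_k` are monic of degree `n - 1`. Finally `V N = diag (π_k(λ_k))` for the
Vandermonde matrix `V`, and `∏_k |π_k(λ_k)| = |det V|²`, so `|det N| = ∏_{j<k} |λ_j - λ_k|`.
-/

open Polynomial

/-- The map (λ₁,…,λ_n, w₁,…,w_{n−1}, l) ↦ (Re κ₀,…,Re κ_{n−1}, Im κ₀,…,Im κ_{n−1})
(here n = m+1), where z^n + Σ κ_j z^j = (1+il)p(z) − i l z q(z) with
p(z) = ∏ (z−λ_j), q(z) = Σ_j w_j ∏_{k≠j}(z−λ_k), and w_n := 1 − Σ_{j<n} w_j.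
The codomain is packaged as the same product type (a coordinate permutation,
which does not affect the absolute value of the Jacobian determinant). -/
noncomputable def specToCoeffs (m : ℕ) :
    ((Fin (m + 1) → ℝ) × (Fin m → ℝ) × ℝ) → ((Fin (m + 1) → ℝ) × (Fin m → ℝ) × ℝ) :=
  fun x =>
    let lam := x.1
    let w := x.2.1
    let l := x.2.2
    let wf : Fin (m + 1) → ℝ := Fin.snoc w (1 - ∑ k, w k)
    let P : Polynomial ℂ :=
      C (1 + Complex.I * l) * ∏ j, (X - C (lam j : ℂ)) -
        C (Complex.I * l) *
          (X * ∑ j, C (wf j : ℂ) * ∏ k ∈ Finset.univ.erase j, (X - C (lam k : ℂ)))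
    (fun j : Fin (m + 1) => (P.coeff (j : ℕ)).re,
     fun j : Fin m => (P.coeff (j : ℕ)).im,
     (P.coeff m).im)

open Finset Matrix

theorem LinearMap.det_eq_det_mul_det_of_fst_comp_inr {R M M' : Type*} [CommRing R]
    [AddCommGroup M] [Module R M] [Module.Free R M] [Module.Finite R M]
    [AddCommGroup M'] [Module R M'] [Module.Free R M'] [Module.Finite R M']
    (f : Module.End R (M × M')) (hf : fst R M M' ∘ₗ f ∘ₗ inr R M M' = 0) :
    f.det = (fst R M M' ∘ₗ f ∘ₗ inl R M M').det * (snd R M M' ∘ₗ f ∘ₗ inr R M M').det := by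
  classical
  let b := Module.Free.chooseBasis R M
  let b' := Module.Free.chooseBasis R M'
  rw [← det_toMatrix (b.prod b'), ← det_toMatrix b, ← det_toMatrix b',
    ← Matrix.det_fromBlocks_zero₁₂ _ (toMatrix b b' (snd R M M' ∘ₗ f ∘ₗ inl R M M'))]
  congr 1
  ext (i | i) (j | j)
  · simp [toMatrix_apply]
  · simpa [toMatrix_apply] using congr_arg (b.repr · i) (LinearMap.congr_fun hf (b' j))
  · simp [toMatrix_apply]
  · simp [toMatrix_apply]

section Calculus

variable {𝕜 E F : Type*} [NontriviallyNormedField 𝕜] [NormedAddCommGroup E] [NormedSpace 𝕜 E]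
  [NormedAddCommGroup F] [NormedSpace 𝕜 F]

theorem fderiv_apply_of_affine_on_line {f : E → F} {x v : E} {s : F}
    (hf : DifferentiableAt 𝕜 f x) (h : ∀ t : 𝕜, f (x + t • v) = f x + t • s) :
    fderiv 𝕜 f x v = s := by
  rw [← hf.lineDeriv_eq_fderiv, lineDeriv, funext h]
  simpa using (((hasDerivAt_id (0 : 𝕜)).smul_const s).const_add (f x)).deriv

theorem det_fderiv_prodMk_comp_fst [FiniteDimensional 𝕜 E] [FiniteDimensional 𝕜 F]
    {f : E → E} {g : E × F → F} {x : E × F}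
    (hf : DifferentiableAt 𝕜 f x.1) (hg : DifferentiableAt 𝕜 g x) :
    LinearMap.det (fderiv 𝕜 (fun z => (f z.1, g z)) x : E × F →ₗ[𝕜] E × F) =
      LinearMap.det (fderiv 𝕜 f x.1 : E →ₗ[𝕜] E) *
        LinearMap.det (fderiv 𝕜 (fun y => g (x.1, y)) x.2 : F →ₗ[𝕜] F) := by
  have hpartial : fderiv 𝕜 (fun y => g (x.1, y)) x.2 = fderiv 𝕜 g x ∘L .inr 𝕜 E F :=
    (hg.hasFDerivAt.comp x.2 (hasFDerivAt_prodMk_right x.1 x.2)).fderiv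
  have hfull : HasFDerivAt (fun z => (f z.1, g z))
      ((fderiv 𝕜 f x.1 ∘L .fst 𝕜 E F).prod (fderiv 𝕜 g x)) x :=
    (hf.hasFDerivAt.comp x hasFDerivAt_fst).prodMk hg.hasFDerivAt
  rw [hfull.fderiv, hpartial, LinearMap.det_eq_det_mul_det_of_fst_comp_inr]
  · rfl
  · ext; simp

end Calculus

section CoeffDifferentiable

variable {𝕜 E F : Type*} [NontriviallyNormedField 𝕜] [NormedAddCommGroup E] [NormedSpace 𝕜 E]
  [NormedAddCommGroup F] [NormedSpace 𝕜 F]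

def CoeffDifferentiable (P : E → 𝕜[X]) : Prop :=
  ∀ n, Differentiable 𝕜 fun x => (P x).coeff n

theorem coeffDifferentiable_C {f : E → 𝕜} (hf : Differentiable 𝕜 f) :
    CoeffDifferentiable fun x => C (f x) := by
  intro n
  simp only [coeff_C]
  split_ifs
  exacts [hf, differentiable_const 0]

theorem coeffDifferentiable_const (P : 𝕜[X]) : CoeffDifferentiable fun _ : E => P :=
  fun _ => differentiable_const _

namespace CoeffDifferentiable

variable {P Q : E → 𝕜[X]}

theorem sub (hP : CoeffDifferentiable P) (hQ : CoeffDifferentiable Q) :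
    CoeffDifferentiable fun x => P x - Q x := fun n => by
  simpa only [coeff_sub] using (hP n).fun_sub (hQ n)

theorem mul (hP : CoeffDifferentiable P) (hQ : CoeffDifferentiable Q) :
    CoeffDifferentiable fun x => P x * Q x := fun n => by
  simp only [coeff_mul]
  exact Differentiable.fun_sum fun k _ => (hP k.1).mul (hQ k.2)

theorem sum {ι : Type*} (s : Finset ι) {P : ι → E → 𝕜[X]}
    (hP : ∀ i ∈ s, CoeffDifferentiable (P i)) :
    CoeffDifferentiable fun x => ∑ i ∈ s, P i x := fun n => by
  simp only [finsetSum_coeff]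
  exact Differentiable.fun_sum fun i hi => hP i hi n

theorem prod {ι : Type*} (s : Finset ι) {P : ι → E → 𝕜[X]}
    (hP : ∀ i ∈ s, CoeffDifferentiable (P i)) :
    CoeffDifferentiable fun x => ∏ i ∈ s, P i x := by
  classical
  induction s using Finset.induction_on with
  | empty => simpa using coeffDifferentiable_const 1
  | insert a s ha ih =>
    simp only [prod_insert ha]
    exact (hP a (mem_insert_self a s)).mul (ih fun i hi => hP i (mem_insert_of_mem hi))

theorem comp {P : F → 𝕜[X]} {g : E → F} (hP : CoeffDifferentiable P) (hg : Differentiable 𝕜 g) :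
    CoeffDifferentiable (P ∘ g) :=
  fun n => (hP n).comp hg

end CoeffDifferentiable

theorem coeffDifferentiable_nodal {ι : Type*} [Fintype ι] (s : Finset ι) :
    CoeffDifferentiable fun v : ι → 𝕜 => Lagrange.nodal s v :=
  .prod s fun i _ =>
    (coeffDifferentiable_const X).sub (coeffDifferentiable_C (differentiable_apply i))

end CoeffDifferentiable

section CoeffVectors

variable (R : Type*) [Semiring R] (m : ℕ)

noncomputable def coeffVec : R[X] →ₗ[R] (Fin m → R) := LinearMap.pi fun j => lcoeff R j

noncomputable def coeffPair : R[X] →ₗ[R] (Fin m → R) × R := (coeffVec R m).prod (lcoeff R m)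

@[simps]
def finSnocLinearEquiv : ((Fin m → R) × R) ≃ₗ[R] (Fin (m + 1) → R) where
  toFun p := Fin.snoc p.1 p.2
  invFun u := (Fin.init u, u (Fin.last m))
  map_add' p q := by ext i; induction i using Fin.lastCases <;> simp
  map_smul' c p := by ext i; induction i using Fin.lastCases <;> simp
  left_inv p := by simp
  right_inv u := Fin.snoc_init_self u

variable {R m}

theorem finSnocLinearEquiv_coeffPair (P : R[X]) :
    finSnocLinearEquiv R m (coeffPair R m P) = coeffVec R (m + 1) P := by
  ext i
  induction i using Fin.lastCases <;> simp [coeffPair, coeffVec]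

theorem finSnocLinearEquiv_symm_single_castSucc (k : Fin m) :
    (finSnocLinearEquiv R m).symm (Pi.single k.castSucc 1) = (Pi.single k 1, 0) := by
  ext j
  · simp [Fin.init, Pi.single_apply]
  · simp [Fin.castSucc_ne_last]

theorem finSnocLinearEquiv_symm_single_last :
    (finSnocLinearEquiv R m).symm (Pi.single (Fin.last m) 1) = (0, 1) := by
  ext j
  · simp [Fin.init, Fin.castSucc_ne_last]
  · simp

theorem CoeffDifferentiable.coeffVec {𝕜 E : Type*} [NontriviallyNormedField 𝕜]
    [NormedAddCommGroup E] [NormedSpace 𝕜 E] {P : E → 𝕜[X]} (hP : CoeffDifferentiable P)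
    (n : ℕ) : Differentiable 𝕜 fun x => coeffVec 𝕜 n (P x) :=
  differentiable_pi.mpr fun j => hP j

theorem CoeffDifferentiable.coeffPair {𝕜 E : Type*} [NontriviallyNormedField 𝕜]
    [NormedAddCommGroup E] [NormedSpace 𝕜 E] {P : E → 𝕜[X]} (hP : CoeffDifferentiable P)
    (n : ℕ) : Differentiable 𝕜 fun x => coeffPair 𝕜 n (P x) :=
  (hP.coeffVec n).prodMk (hP n)

end CoeffVectors

section CoeffMatrix

variable {R : Type*} [CommRing R]

def coeffMatrix {n : ℕ} (P : Fin n → R[X]) : Matrix (Fin n) (Fin n) R :=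
  Matrix.of fun i j => (P j).coeff i

theorem coeffMatrix_smul {n : ℕ} (c : R) (P : Fin n → R[X]) :
    coeffMatrix (fun j => c • P j) = c • coeffMatrix P := by
  ext; simp [coeffMatrix]

theorem vandermonde_mul_coeffMatrix {n : ℕ} (v : Fin n → R) (P : Fin n → R[X])
    (hP : ∀ j, (P j).natDegree < n) :
    vandermonde v * coeffMatrix P = Matrix.of fun i j => (P j).eval (v i) := by
  ext i j
  rw [mul_apply, of_apply, eval_eq_sum_range' (hP j), ← Fin.sum_univ_eq_sum_range]
  simp [coeffMatrix, vandermonde_apply, mul_comm]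

theorem det_coeffMatrix_sub_last {m : ℕ} (P : Fin (m + 1) → R[X])
    (hP : ∀ j, (P j).coeff m = 1) :
    (coeffMatrix fun k : Fin m => P k.castSucc - P (Fin.last m)).det = (coeffMatrix P).det := by
  set Q : Fin (m + 1) → R[X] := Fin.snoc (fun k => P k.castSucc - P (Fin.last m)) (P (Fin.last m))
  have hQP : (coeffMatrix Q).det = (coeffMatrix P).det := by
    rw [← det_transpose, ← det_transpose (coeffMatrix P)]
    refine det_eq_of_forall_row_eq_smul_add_const (fun k => if k = Fin.last m then 0 else -1)
      (Fin.last m) (by simp) fun k i => ?_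
    induction k using Fin.lastCases <;> simp [coeffMatrix, Q, sub_eq_add_neg]
  rw [← hQP, det_succ_row _ (Fin.last m), sum_eq_single (Fin.last m)]
  · have hminor : (coeffMatrix Q).submatrix Fin.castSucc Fin.castSucc =
        coeffMatrix fun k : Fin m => P k.castSucc - P (Fin.last m) := by
      ext i j
      simp [coeffMatrix, Q]
    rw [Fin.succAbove_last, hminor]
    simp [coeffMatrix, Q, hP, ← two_mul, pow_mul]
  · intro j _ hj
    obtain ⟨j, rfl⟩ := Fin.exists_castSucc_eq.mpr hj
    simp [coeffMatrix, Q, hP]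
  · simp

theorem det_coeffMatrix_snoc_X_mul {m : ℕ} (Q : Fin m → R[X]) (r : R[X]) :
    (coeffMatrix (Fin.snoc (fun k => X * Q k) r)).det =
      (-1) ^ m * r.coeff 0 * (coeffMatrix Q).det := by
  rw [det_succ_row_zero, sum_eq_single (Fin.last m)]
  · have hminor : (coeffMatrix (Fin.snoc (fun k => X * Q k) r)).submatrix Fin.succ Fin.castSucc =
        coeffMatrix Q := by
      ext i j
      simp [coeffMatrix, coeff_X_mul]
    rw [Fin.succAbove_last, hminor]
    simp [coeffMatrix]
  · intro j _ hj
    obtain ⟨j, rfl⟩ := Fin.exists_castSucc_eq.mpr hj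
    simp [coeffMatrix]
  · simp

theorem det_vandermonde_mul_det_coeffMatrix_nodal_erase [Nontrivial R] {n : ℕ} (v : Fin n → R) :
    (vandermonde v).det * (coeffMatrix fun k => Lagrange.nodal (univ.erase k) v).det =
      ∏ k, ∏ j ∈ univ.erase k, (v k - v j) := by
  rw [← det_mul,
    vandermonde_mul_coeffMatrix _ _ fun k => by simpa [Lagrange.natDegree_nodal] using k.pos,
    show (Matrix.of fun i k => (Lagrange.nodal (univ.erase k) v).eval (v i)) =
      diagonal fun k => ∏ j ∈ univ.erase k, (v k - v j) from ?_, det_diagonal]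
  ext i k
  rcases eq_or_ne i k with rfl | hik
  · simp [Lagrange.eval_nodal]
  · simp [hik, Lagrange.eval_nodal_at_node (mem_erase.mpr ⟨hik, mem_univ i⟩)]

end CoeffMatrix

theorem prod_filter_fst_lt_snd {ι M : Type*} [Fintype ι] [LinearOrder ι] [LocallyFiniteOrderTop ι]
    [CommMonoid M] [DecidablePred fun p : ι × ι => p.1 < p.2] (f : ι → ι → M) :
    ∏ p ∈ univ.filter (fun p : ι × ι => p.1 < p.2), f p.1 p.2 = ∏ i, ∏ j ∈ Ioi i, f i j := by
  rw [prod_filter, ← univ_product_univ, prod_product]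
  refine prod_congr rfl fun i _ => ?_
  rw [← prod_filter]
  congr 1
  ext j
  simp

theorem abs_det_coeffMatrix_nodal_erase {n : ℕ} {v : Fin n → ℝ} (hv : Function.Injective v) :
    |(coeffMatrix fun k => Lagrange.nodal (univ.erase k) v).det| =
      ∏ i, ∏ j ∈ Ioi i, |v j - v i| := by
  have hV : |(vandermonde v).det| = ∏ i, ∏ j ∈ Ioi i, |v j - v i| := by
    simp [det_vandermonde, abs_prod]
  have hsq : |(vandermonde v).det| * |(coeffMatrix fun k => Lagrange.nodal (univ.erase k) v).det|
      = |(vandermonde v).det| * ∏ i, ∏ j ∈ Ioi i, |v j - v i| := by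
    rw [← abs_mul, det_vandermonde_mul_det_coeffMatrix_nodal_erase, hV, ← prod_mul_distrib]
    simp_rw [← prod_mul_distrib, abs_prod]
    calc ∏ i, ∏ j ∈ univ.erase i, |v i - v j| = ∏ i, ∏ j ∈ {i}ᶜ, |v j - v i| := by
          simp [abs_sub_comm, compl_eq_univ_sdiff, sdiff_singleton_eq_erase]
      _ = ∏ i, ∏ j ∈ Ioi i, |v j - v i| * |v i - v j| :=
          (prod_prod_Ioi_mul_eq_prod_prod_off_diag _).symm
      _ = _ := prod_congr rfl fun i _ => prod_congr rfl fun j _ => by rw [abs_sub_comm (v i)]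
  exact mul_left_cancel₀ (abs_ne_zero.mpr (det_vandermonde_ne_zero_iff.mpr hv)) hsq

theorem Lagrange.nodal_add_smul_single {R ι : Type*} [CommRing R] [DecidableEq ι] {s : Finset ι}
    {k : ι} (hk : k ∈ s) (v : ι → R) (t : R) :
    nodal s (v + t • Pi.single k 1) = nodal s v - t • nodal (s.erase k) v := by
  have herase : nodal (s.erase k) (v + t • Pi.single k 1) = nodal (s.erase k) v :=
    prod_congr rfl fun j hj => by simp [(mem_erase.mp hj).1]
  rw [nodal_eq_mul_nodal_erase hk, nodal_eq_mul_nodal_erase hk (v := v), herase]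
  simp only [Pi.add_apply, Pi.smul_apply, Pi.single_eq_same, smul_eq_mul, mul_one, C_add,
    smul_eq_C_mul]
  ring

theorem Lagrange.coeff_nodal_univ_erase {R : Type*} [CommRing R] [Nontrivial R] {m : ℕ}
    (v : Fin (m + 1) → R) (k : Fin (m + 1)) : (nodal (univ.erase k) v).coeff m = 1 := by
  simpa [natDegree_nodal] using (nodal_monic (s := univ.erase k) (v := v)).coeff_natDegree

section SpecToCoeffs

open Lagrange

variable {m : ℕ}

noncomputable def completeWeights (w : Fin m → ℝ) : Fin (m + 1) → ℝ := Fin.snoc w (1 - ∑ k, w k)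

noncomputable def weightedNodal (lam : Fin (m + 1) → ℝ) (w : Fin m → ℝ) : ℝ[X] :=
  ∑ j, C (completeWeights w j) * nodal (univ.erase j) lam

noncomputable def imPoly (lam : Fin (m + 1) → ℝ) (w : Fin m → ℝ) : ℝ[X] :=
  nodal univ lam - X * weightedNodal lam w

noncomputable def nodalCoeffs (lam : Fin (m + 1) → ℝ) : Fin (m + 1) → ℝ :=
  coeffVec ℝ (m + 1) (nodal univ lam)

noncomputable def scaledImCoeffs (z : (Fin (m + 1) → ℝ) × (Fin m → ℝ) × ℝ) : (Fin m → ℝ) × ℝ :=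
  z.2.2 • coeffPair ℝ m (imPoly z.1 z.2.1)

theorem specToCoeffs_eq (m : ℕ) :
    specToCoeffs m = fun z => (nodalCoeffs z.1, scaledImCoeffs z) := by
  funext ⟨lam, w, l⟩
  have hP : C (1 + Complex.I * l) * ∏ j, (X - C (lam j : ℂ)) - C (Complex.I * l) *
        (X * ∑ j, C ((Fin.snoc w (1 - ∑ k, w k) : Fin (m + 1) → ℝ) j : ℂ) *
          ∏ k ∈ univ.erase j, (X - C (lam k : ℂ))) =
      (nodal univ lam).map Complex.ofRealHom +
        C (Complex.I * l) * (imPoly lam w).map Complex.ofRealHom := by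
    simp [imPoly, weightedNodal, completeWeights, nodal, Polynomial.map_prod, Polynomial.map_sum]
    ring
  dsimp only [specToCoeffs]
  rw [hP]
  refine Prod.ext (funext fun j => ?_) (Prod.ext (funext fun j => ?_) ?_) <;>
    simp [nodalCoeffs, scaledImCoeffs, coeffVec, coeffPair, coeff_C_mul, -map_mul]

theorem differentiable_completeWeights (j : Fin (m + 1)) :
    Differentiable ℝ fun w : Fin m → ℝ => completeWeights w j := by
  induction j using Fin.lastCases <;>
    simp only [completeWeights, Fin.snoc_last, Fin.snoc_castSucc] <;> fun_prop

theorem coeffDifferentiable_imPoly :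
    CoeffDifferentiable fun z : (Fin (m + 1) → ℝ) × (Fin m → ℝ) × ℝ => imPoly z.1 z.2.1 :=
  ((coeffDifferentiable_nodal univ).comp differentiable_fst).sub <|
    (coeffDifferentiable_const X).mul <| .sum univ fun j _ =>
      (coeffDifferentiable_C ((differentiable_completeWeights j).comp
        (differentiable_fst.comp differentiable_snd))).mul
      ((coeffDifferentiable_nodal _).comp differentiable_fst)

theorem differentiable_nodalCoeffs : Differentiable ℝ (nodalCoeffs (m := m)) :=
  (coeffDifferentiable_nodal univ).coeffVec (m + 1)

theorem differentiable_scaledImCoeffs : Differentiable ℝ (scaledImCoeffs (m := m)) :=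
  (differentiable_snd.comp differentiable_snd).fun_smul (coeffDifferentiable_imPoly.coeffPair m)

theorem fderiv_nodalCoeffs_single (lam : Fin (m + 1) → ℝ) (k : Fin (m + 1)) :
    fderiv ℝ nodalCoeffs lam (Pi.single k 1) = -coeffVec ℝ (m + 1) (nodal (univ.erase k) lam) :=
  fderiv_apply_of_affine_on_line (differentiable_nodalCoeffs lam) fun t => by
    rw [nodalCoeffs, nodalCoeffs, nodal_add_smul_single (mem_univ k), map_sub, map_smul,
      smul_neg, sub_eq_add_neg]

theorem det_fderiv_nodalCoeffs (lam : Fin (m + 1) → ℝ) :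
    LinearMap.det (fderiv ℝ nodalCoeffs lam : (Fin (m + 1) → ℝ) →ₗ[ℝ] Fin (m + 1) → ℝ) =
      (-1) ^ (m + 1) * (coeffMatrix fun k => nodal (univ.erase k) lam).det := by
  rw [← LinearMap.det_toMatrix', show LinearMap.toMatrix' _ = -coeffMatrix _ from ?_, det_neg,
    Fintype.card_fin]
  ext i k
  simp only [LinearMap.toMatrix'_apply, ContinuousLinearMap.coe_coe, fderiv_nodalCoeffs_single]
  simp [coeffMatrix, coeffVec]

theorem completeWeights_add_smul_single (w : Fin m → ℝ) (k : Fin m) (t : ℝ) :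
    completeWeights (w + t • Pi.single k 1) =
      completeWeights w + t • (Pi.single k.castSucc 1 - Pi.single (Fin.last m) 1) := by
  ext j
  induction j using Fin.lastCases
  · simp [completeWeights, sum_add_distrib, ← mul_sum]
    ring
  · simp [completeWeights, Pi.single_apply, Fin.castSucc_ne_last]

theorem imPoly_add_smul_single (lam : Fin (m + 1) → ℝ) (w : Fin m → ℝ) (k : Fin m) (t : ℝ) :
    imPoly lam (w + t • Pi.single k 1) = imPoly lam w -
      t • (X * (nodal (univ.erase k.castSucc) lam - nodal (univ.erase (Fin.last m)) lam)) := by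
  have hq : weightedNodal lam (w + t • Pi.single k 1) = weightedNodal lam w +
      t • (nodal (univ.erase k.castSucc) lam - nodal (univ.erase (Fin.last m)) lam) := by
    simp [weightedNodal, completeWeights_add_smul_single, add_mul, sub_mul, sum_add_distrib,
      Pi.single_apply, smul_eq_C_mul, mul_sub, apply_ite C, ite_mul]
  rw [imPoly, imPoly, hq, mul_add, mul_smul_comm]
  abel

theorem imPoly_coeff_zero (lam : Fin (m + 1) → ℝ) (w : Fin m → ℝ) :
    (imPoly lam w).coeff 0 = ∏ j, -lam j := by
  simp [imPoly, coeff_zero_eq_eval_zero, eval_nodal]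

section Partial

variable (lam : Fin (m + 1) → ℝ) (w : Fin m → ℝ) (l : ℝ)

theorem fderiv_scaledImCoeffs_inl (k : Fin m) :
    fderiv ℝ (fun y => scaledImCoeffs (lam, y)) (w, l) (Pi.single k 1, 0) =
      coeffPair ℝ m (X * (-l • (nodal (univ.erase k.castSucc) lam -
        nodal (univ.erase (Fin.last m)) lam))) := by
  refine fderiv_apply_of_affine_on_line
    (differentiable_scaledImCoeffs.comp ((differentiable_const lam).prodMk differentiable_id) _)
    fun t => ?_
  simp only [scaledImCoeffs, Prod.smul_mk, Prod.mk_add_mk, smul_zero, add_zero,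
    imPoly_add_smul_single, map_sub, map_smul, mul_smul_comm]
  module

theorem fderiv_scaledImCoeffs_inr :
    fderiv ℝ (fun y => scaledImCoeffs (lam, y)) (w, l) (0, 1) = coeffPair ℝ m (imPoly lam w) :=
  fderiv_apply_of_affine_on_line
    (differentiable_scaledImCoeffs.comp ((differentiable_const lam).prodMk differentiable_id) _)
    fun t => by simp [scaledImCoeffs, add_smul]

theorem det_fderiv_scaledImCoeffs_right :
    LinearMap.det (fderiv ℝ (fun y => scaledImCoeffs (lam, y)) (w, l) :
        (Fin m → ℝ) × ℝ →ₗ[ℝ] (Fin m → ℝ) × ℝ) =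
      l ^ m * (imPoly lam w).coeff 0 * (coeffMatrix fun k : Fin m =>
        nodal (univ.erase k.castSucc) lam - nodal (univ.erase (Fin.last m)) lam).det := by
  let b := Module.Basis.ofEquivFun (finSnocLinearEquiv ℝ m)
  have hmatrix : LinearMap.toMatrix b b (fderiv ℝ (fun y => scaledImCoeffs (lam, y)) (w, l)) =
      coeffMatrix (Fin.snoc (fun k => X * (-l • (nodal (univ.erase k.castSucc) lam -
        nodal (univ.erase (Fin.last m)) lam))) (imPoly lam w)) := by
    ext i k
    rw [LinearMap.toMatrix_apply, Module.Basis.ofEquivFun_repr_apply, Module.Basis.coe_ofEquivFun]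
    induction k using Fin.lastCases <;> dsimp only
    · rw [finSnocLinearEquiv_symm_single_last, ContinuousLinearMap.coe_coe,
        fderiv_scaledImCoeffs_inr, finSnocLinearEquiv_coeffPair]
      simp [coeffVec, coeffMatrix]
    · rw [finSnocLinearEquiv_symm_single_castSucc, ContinuousLinearMap.coe_coe,
        fderiv_scaledImCoeffs_inl, finSnocLinearEquiv_coeffPair]
      simp [coeffVec, coeffMatrix]
  have hsign : (-1 : ℝ) ^ m * (-l) ^ m = l ^ m := by rw [← mul_pow, neg_one_mul, neg_neg]
  rw [← LinearMap.det_toMatrix b, hmatrix, det_coeffMatrix_snoc_X_mul, coeffMatrix_smul, det_smul,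
    Fintype.card_fin]
  linear_combination (imPoly lam w).coeff 0 * (coeffMatrix fun k : Fin m =>
    nodal (univ.erase k.castSucc) lam - nodal (univ.erase (Fin.last m)) lam).det * hsign

end Partial

end SpecToCoeffs

theorem stmt9_general (m : ℕ) (x : (Fin (m + 1) → ℝ) × (Fin m → ℝ) × ℝ)
    (hlam : Function.Injective x.1) (hl : 0 < x.2.2) :
    DifferentiableAt ℝ (specToCoeffs m) x ∧
    |LinearMap.det ((fderiv ℝ (specToCoeffs m) x).toLinearMap)| =
      x.2.2 ^ m * |∏ j, x.1 j| *
        ∏ p ∈ Finset.univ.filter (fun p : Fin (m + 1) × Fin (m + 1) => p.1 < p.2),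
          |x.1 p.1 - x.1 p.2| ^ 2 := by
  obtain ⟨lam, w, l⟩ := x
  dsimp only at hlam hl ⊢
  rw [specToCoeffs_eq]
  refine ⟨((differentiable_nodalCoeffs.comp differentiable_fst).prodMk
    differentiable_scaledImCoeffs).differentiableAt, ?_⟩
  rw [det_fderiv_prodMk_comp_fst differentiable_nodalCoeffs.differentiableAt
      differentiable_scaledImCoeffs.differentiableAt, det_fderiv_nodalCoeffs,
    det_fderiv_scaledImCoeffs_right,
    det_coeffMatrix_sub_last _ (Lagrange.coeff_nodal_univ_erase lam),
    imPoly_coeff_zero, prod_filter_fst_lt_snd fun i j => |lam i - lam j| ^ 2]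
  simp only [abs_mul, abs_pow, abs_neg, abs_one, one_pow, one_mul, abs_of_pos hl, abs_prod,
    abs_det_coeffMatrix_nodal_erase hlam]
  rw [mul_left_comm, ← sq, ← prod_pow]
  congr 1
  exact prod_congr rfl fun i _ => by
    rw [← prod_pow]
    exact prod_congr rfl fun j _ => by rw [abs_sub_comm]

/-- on the open set of (λ, w, l) with λ_j distinct and nonzero, w_j > 0,
Σ w_j < 1 and l > 0, the map Φ = (Re κ, Im κ) is differentiable with
|det DΦ| = l^{n−1} · |∏ λ_j| · ∏_{j<k} |λ_j − λ_k|². -/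
theorem stmt9 (m : ℕ) (x : (Fin (m + 1) → ℝ) × (Fin m → ℝ) × ℝ)
    (hlam : Function.Injective x.1) (hlam0 : ∀ j, x.1 j ≠ 0)
    (hw : ∀ j, 0 < x.2.1 j) (hw1 : ∑ j, x.2.1 j < 1) (hl : 0 < x.2.2) :
    DifferentiableAt ℝ (specToCoeffs m) x ∧
    |LinearMap.det ((fderiv ℝ (specToCoeffs m) x).toLinearMap)| =
      x.2.2 ^ m * |∏ j, x.1 j| *
        ∏ p ∈ Finset.univ.filter (fun p : Fin (m + 1) × Fin (m + 1) => p.1 < p.2),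
          |x.1 p.1 - x.1 p.2| ^ 2 :=
  stmt9_general m x hlam hl
end

section
/- Let λ_1,…,λ_n be distinct nonzero reals, w_1,…,w_n > 0 with Σ_{j=1}^n w_j = 1, l > 0, and let z_1,…,z_n be the roots (with multiplicity) of P_l(z) := (1+il)∏_{j=1}^n(z−λ_j) − i l z Σ_{j=1}^n w_j ∏_{k≠j}(z−λ_k). Then ∏_{j=1}^n w_j = ∏_{j,k=1}^n |z_j − \bar{z}_k| / ( (2l)^n · ∏_{1≤j<k≤n} |λ_j − λ_k|² · |Re(∏_{j=1}^n z_j)| ). -/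
open Polynomial Finset

/-!
Since `p` and `z q` have real coefficients, `P_l + conj P_l = 2 p`, where `conj P_l` has the roots
`z̄_k`. Evaluating at `z_j` gives `∏_k (z_j - z̄_k) = 2 p(z_j)`, and multiplying over `j` and
exchanging the roles of the two root families, `∏_{j,k} |z_j - z̄_k| = 2ⁿ ∏_k |P_l(λ_k)|`.
At a node only one term of `q` survives: `P_l(λ_k) = -i l λ_k w_k ∏_{k' ≠ k} (λ_k - λ_{k'})`.
The constant term gives `∏ z_j = (1 + i l) ∏ λ_j`, so `|Re ∏ z_j| = ∏ |λ_j|`.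
-/

section Pairs

variable {ι M : Type*} [Fintype ι] [LinearOrder ι] [CommMonoid M]

theorem prod_prod_erase_eq_prod_lt_sq (f : ι → ι → M) (hf : ∀ j k, f j k = f k j) :
    ∏ j, ∏ k ∈ univ.erase j, f j k =
      ∏ p ∈ univ.filter (fun p : ι × ι => p.1 < p.2), f p.1 p.2 ^ 2 := by
  have hsplit : ∀ j k, (if k ≠ j then f j k else 1) =
      (if j < k then f j k else 1) * (if k < j then f k j else 1) := by
    intro j k
    rcases lt_trichotomy j k with h | rfl | h
    · simp [h, h.ne', h.not_gt]
    · simp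
    · simp [h, h.ne, h.not_gt, hf j k]
  calc ∏ j, ∏ k ∈ univ.erase j, f j k
      = ∏ j, ∏ k, ((if j < k then f j k else 1) * (if k < j then f k j else 1)) := by
        simp_rw [← filter_ne', prod_filter, hsplit]
    _ = (∏ j, ∏ k, if j < k then f j k else 1) * ∏ k, ∏ j, if k < j then f k j else 1 := by
        simp_rw [prod_mul_distrib]
        rw [prod_comm (s := univ) (t := univ) (f := fun k j => if k < j then f k j else 1)]
    _ = _ := by
        rw [← sq, prod_filter, Fintype.prod_prod_type, ← prod_pow]
        simp_rw [← prod_pow, ite_pow, one_pow]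

end Pairs

section RootProducts

variable {ι κ : Type*} [Fintype ι] [Fintype κ]

theorem eval_prod_X_sub_C_self {R : Type*} [CommRing R] (x : ι → R) (i : ι) :
    (∏ j, (X - C (x j))).eval (x i) = 0 := by
  rw [eval_prod]
  exact prod_eq_zero (mem_univ i) (by simp)

theorem prod_norm_eval_prod_X_sub_C_comm (z : ι → ℂ) (y : κ → ℂ) :
    ∏ j, ‖(∏ k, (X - C (y k))).eval (z j)‖ = ∏ k, ‖(∏ j, (X - C (z j))).eval (y k)‖ := by
  simp only [eval_prod, eval_sub, eval_X, eval_C, norm_prod]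
  rw [prod_comm]
  simp_rw [norm_sub_rev]

theorem prod_sub_conj_eq_two_mul_eval {P p : ℂ[X]} {z : ι → ℂ} (hP : P = ∏ j, (X - C (z j)))
    (hsum : P.map (starRingEnd ℂ) + P = 2 * p) (j : ι) :
    ∏ k, (z j - starRingEnd ℂ (z k)) = 2 * p.eval (z j) := by
  subst hP
  have := congrArg (eval (z j)) hsum
  rw [eval_add, eval_prod_X_sub_C_self, add_zero, Polynomial.map_prod, eval_prod, eval_mul,
    eval_ofNat] at this
  simpa using this

end RootProducts

theorem eval_sum_mul_prod_erase {R ι : Type*} [CommRing R] [Fintype ι] [DecidableEq ι]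
    (a x : ι → R) (i : ι) :
    (∑ j, C (a j) * ∏ k ∈ univ.erase j, (X - C (x k))).eval (x i) =
      a i * ∏ k ∈ univ.erase i, (x i - x k) := by
  simp only [eval_finsetSum, eval_mul, eval_C, eval_prod, eval_sub, eval_X]
  refine sum_eq_single i (fun j _ hji => ?_) (by simp)
  rw [prod_eq_zero (mem_erase.mpr ⟨Ne.symm hji, mem_univ i⟩) (sub_self _), mul_zero]

section PerturbedCharpoly

variable {ι : Type*} [Fintype ι] [DecidableEq ι] (lam w : ι → ℝ) (l : ℝ)

-- `P_l` in the paper's notation.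
noncomputable def perturbedCharpoly : ℂ[X] :=
  C (1 + Complex.I * l) * ∏ j, (X - C (lam j : ℂ)) -
    C (Complex.I * l) * (X * ∑ j, C (w j : ℂ) * ∏ k ∈ univ.erase j, (X - C (lam k : ℂ)))

theorem map_conj_perturbedCharpoly_add :
    (perturbedCharpoly lam w l).map (starRingEnd ℂ) + perturbedCharpoly lam w l =
      2 * ∏ j, (X - C (lam j : ℂ)) := by
  simp only [perturbedCharpoly, Polynomial.map_sub, Polynomial.map_mul, Polynomial.map_prod,
    Polynomial.map_sum, Polynomial.map_C, Polynomial.map_X, map_add, map_one, map_mul,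
    Polynomial.map_add, Polynomial.map_one, Complex.conj_I, Complex.conj_ofReal, C_neg]
  ring

theorem eval_perturbedCharpoly_node (i : ι) :
    (perturbedCharpoly lam w l).eval (lam i : ℂ) =
      -(Complex.I * l) * lam i * w i * ∏ k ∈ univ.erase i, ((lam i : ℂ) - lam k) := by
  rw [perturbedCharpoly, eval_sub, eval_mul, eval_mul, eval_mul,
    eval_prod_X_sub_C_self (fun j => (lam j : ℂ)),
    eval_sum_mul_prod_erase (fun j => (w j : ℂ)) (fun j => (lam j : ℂ)), eval_C, eval_C, eval_X]
  ring

theorem eval_perturbedCharpoly_zero :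
    (perturbedCharpoly lam w l).eval 0 = (1 + Complex.I * l) * ∏ j, -(lam j : ℂ) := by
  simp [perturbedCharpoly, eval_prod]

theorem norm_eval_perturbedCharpoly_node (hl : 0 ≤ l) {i : ι} (hw : 0 ≤ w i) :
    ‖(perturbedCharpoly lam w l).eval (lam i : ℂ)‖ =
      l * |lam i| * w i * ∏ k ∈ univ.erase i, |lam i - lam k| := by
  rw [eval_perturbedCharpoly_node]
  simp only [norm_mul, norm_neg, norm_prod, Complex.norm_I, one_mul, ← Complex.ofReal_sub,
    Complex.norm_real, Real.norm_eq_abs, abs_of_nonneg hl, abs_of_nonneg hw]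

variable {lam w l} {z : ι → ℂ}

theorem prod_roots_perturbedCharpoly (hz : perturbedCharpoly lam w l = ∏ j, (X - C (z j))) :
    ∏ j, z j = (1 + Complex.I * l) * ∏ j, (lam j : ℂ) := by
  have h0 := eval_perturbedCharpoly_zero lam w l
  rw [hz, eval_prod] at h0
  simp only [eval_sub, eval_X, eval_C, zero_sub, prod_neg] at h0
  rw [mul_left_comm] at h0
  exact mul_left_cancel₀ (pow_ne_zero _ (neg_ne_zero.mpr one_ne_zero)) h0

theorem abs_re_prod_roots_perturbedCharpoly
    (hz : perturbedCharpoly lam w l = ∏ j, (X - C (z j))) : |(∏ j, z j).re| = ∏ j, |lam j| := by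
  rw [prod_roots_perturbedCharpoly hz, ← Complex.ofReal_prod, Complex.re_mul_ofReal]
  simp [abs_prod]

end PerturbedCharpoly

theorem prod_prod_norm_roots_sub_conj {ι : Type*} [Fintype ι] [LinearOrder ι] {lam w : ι → ℝ}
    {l : ℝ} {z : ι → ℂ} (hz : perturbedCharpoly lam w l = ∏ j, (X - C (z j))) (hl : 0 ≤ l)
    (hw : ∀ j, 0 ≤ w j) :
    ∏ j, ∏ k, ‖z j - starRingEnd ℂ (z k)‖ =
      (2 * l) ^ Fintype.card ι * (∏ j, |lam j|) * (∏ j, w j) *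
        ∏ p ∈ univ.filter (fun p : ι × ι => p.1 < p.2), |lam p.1 - lam p.2| ^ 2 := by
  calc ∏ j, ∏ k, ‖z j - starRingEnd ℂ (z k)‖
      = ∏ j, (2 * ‖(∏ k, (X - C (lam k : ℂ))).eval (z j)‖) := by
        refine prod_congr rfl fun j _ => ?_
        rw [← norm_prod, prod_sub_conj_eq_two_mul_eval hz (map_conj_perturbedCharpoly_add lam w l),
          norm_mul, Complex.norm_two]
    _ = 2 ^ Fintype.card ι * ∏ k, ‖(perturbedCharpoly lam w l).eval (lam k : ℂ)‖ := by
        rw [prod_mul_distrib, prod_const, card_univ, prod_norm_eval_prod_X_sub_C_comm, hz]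
    _ = 2 ^ Fintype.card ι * ∏ k, (l * |lam k| * w k * ∏ k' ∈ univ.erase k, |lam k - lam k'|) :=
        congrArg _ <| prod_congr rfl fun k _ => norm_eval_perturbedCharpoly_node lam w l hl (hw k)
    _ = _ := by
        rw [prod_mul_distrib, prod_mul_distrib, prod_mul_distrib, prod_const, card_univ,
          prod_prod_erase_eq_prod_lt_sq _ fun j k => abs_sub_comm _ _, mul_pow]
        ring

theorem stmt11_general (m : ℕ) (lam : Fin (m + 1) → ℝ) (hlam : Function.Injective lam)
    (hlam0 : ∀ j, lam j ≠ 0)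
    (w : Fin (m + 1) → ℝ) (hw : ∀ j, 0 < w j)
    (l : ℝ) (hl : 0 < l) (z : Fin (m + 1) → ℂ)
    (hz : C (1 + Complex.I * l) * ∏ j, (X - C (lam j : ℂ)) -
        C (Complex.I * l) *
          (X * ∑ j, C (w j : ℂ) * ∏ k ∈ Finset.univ.erase j, (X - C (lam k : ℂ))) =
      ∏ j, (X - C (z j))) :
    ∏ j, w j =
      (∏ j, ∏ k, ‖z j - (starRingEnd ℂ) (z k)‖) /
        ((2 * l) ^ (m + 1) *
          (∏ p ∈ Finset.univ.filter (fun p : Fin (m + 1) × Fin (m + 1) => p.1 < p.2),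
            |lam p.1 - lam p.2| ^ 2) *
          |(∏ j, z j).re|) := by
  have hP : perturbedCharpoly lam w l = ∏ j, (X - C (z j)) := hz
  have hpairs : 0 < ∏ p ∈ univ.filter (fun p : Fin (m + 1) × Fin (m + 1) => p.1 < p.2),
      |lam p.1 - lam p.2| ^ 2 :=
    prod_pos fun p hp => by
      have : lam p.1 - lam p.2 ≠ 0 := sub_ne_zero.mpr (hlam.ne (mem_filter.mp hp).2.ne)
      positivity
  have hnodes : 0 < ∏ j, |lam j| := prod_pos fun j _ => abs_pos.mpr (hlam0 j)
  rw [prod_prod_norm_roots_sub_conj hP hl.le fun j => (hw j).le,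
    abs_re_prod_roots_perturbedCharpoly hP, Fintype.card_fin, eq_div_iff (by positivity)]
  ring

/-- with λ_j distinct nonzero reals, weights w_j > 0 summing to 1, l > 0, and
z_1,…,z_n the roots (with multiplicity) of P_l(z) = (1+il)∏(z−λ_j) − i l z Σ w_j ∏_{k≠j}(z−λ_k):
∏ w_j = ∏_{j,k} |z_j − z̄_k| / ((2l)^n · ∏_{j<k} |λ_j − λ_k|² · |Re ∏ z_j|). -/
theorem stmt11 (m : ℕ) (lam : Fin (m + 1) → ℝ) (hlam : Function.Injective lam)
    (hlam0 : ∀ j, lam j ≠ 0)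
    (w : Fin (m + 1) → ℝ) (hw : ∀ j, 0 < w j) (hw1 : ∑ j, w j = 1)
    (l : ℝ) (hl : 0 < l) (z : Fin (m + 1) → ℂ)
    (hz : C (1 + Complex.I * l) * ∏ j, (X - C (lam j : ℂ)) -
        C (Complex.I * l) *
          (X * ∑ j, C (w j : ℂ) * ∏ k ∈ Finset.univ.erase j, (X - C (lam k : ℂ))) =
      ∏ j, (X - C (z j))) :
    ∏ j, w j =
      (∏ j, ∏ k, ‖z j - (starRingEnd ℂ) (z k)‖) /
        ((2 * l) ^ (m + 1) *
          (∏ p ∈ Finset.univ.filter (fun p : Fin (m + 1) × Fin (m + 1) => p.1 < p.2),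
            |lam p.1 - lam p.2| ^ 2) *
          |(∏ j, z j).re|) :=
  stmt11_general m lam hlam hlam0 w hw l hl z hz
end

section
/- Fix distinct nonzero reals λ_1,…,λ_m. On the open simplex U = {(w_1,…,w_m) ∈ ℝ^m : w_j > 0, Σ_{j=1}^m w_j < 1}, set w_0 := 1 − Σ_{j=1}^m w_j and let q(z) = Σ_{j=0}^m q_j z^j (with q_m = 1) be defined by q(z) := w_0 ∏_{j=1}^m (z−λ_j) + Σ_{j=1}^m w_j z ∏_{k≠j} (z−λ_k). Then the map (w_1,…,w_m) ↦ (q_0,…,q_{m−1}) is differentiable on U and the absolute value of the determinant of its Jacobian matrix equals ∏_{j=1}^m |λ_j| · ∏_{1≤j<k≤m} |λ_j − λ_k| at every point of U. -/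
/-!
Writing `P_j := ∏_{k ≠ j} (X - λ_k)`, the identity `X P_j = ∏_k (X - λ_k) + λ_j P_j` turns
`q` into `∏_k (X - λ_k) + ∑_j w_j λ_j P_j`, so the map is affine with Jacobian `A · diag λ`,
where the columns of `A` are the coefficient vectors of the `P_j`. The Vandermonde matrix `V`
of the `λ_j` evaluates these columns: `V A = diag (P_j(λ_j))`. Since
`|det V| = ∏_{j<k} |λ_j - λ_k|` and `|∏_j P_j(λ_j)| = ∏_{j<k} |λ_j - λ_k|²`, cancelling gives
`|det A| = ∏_{j<k} |λ_j - λ_k|`.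
-/

open Polynomial

/-- The map from the weights (w₁,…,w_m) on the open simplex to the lower coefficients
(q₀,…,q_{m−1}) of q(z) = w₀∏_j(z−λ_j) + Σ_j w_j z ∏_{k≠j}(z−λ_k), with
w₀ := 1 − Σ_j w_j. -/
noncomputable def weightsToCoeffs0 {m : ℕ} (lam : Fin m → ℝ) (v : Fin m → ℝ)
    (i : Fin m) : ℝ :=
  (C (1 - ∑ k, v k) * ∏ j, (X - C (lam j)) +
      ∑ j, C (v j) * (X * ∏ k ∈ Finset.univ.erase j, (X - C (lam k)))).coeff (i : ℕ)

open Finset Lagrange Matrix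

section
variable {ι M : Type*} [Fintype ι] [LinearOrder ι] [LocallyFiniteOrderTop ι] [CommMonoid M]

theorem prod_prod_erase_eq_sq [LocallyFiniteOrderBot ι] (f : ι → ι → M)
    (hf : ∀ i j, f i j = f j i) :
    ∏ i, ∏ j ∈ univ.erase i, f i j = (∏ i, ∏ j ∈ Ioi i, f i j) ^ 2 := by
  have herase (i : ι) : univ.erase i = Ioi i ∪ Iio i := by
    ext j; simp [eq_comm]
  have hswap : ∏ i, ∏ j ∈ Iio i, f i j = ∏ j, ∏ i ∈ Ioi j, f i j :=
    prod_comm' (by simp)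
  have hdisj (i : ι) : Disjoint (Ioi i) (Iio i) :=
    disjoint_left.2 fun _ h1 h2 => (mem_Ioi.1 h1).not_gt (mem_Iio.1 h2)
  simp_rw [herase, prod_union (hdisj _), prod_mul_distrib, hswap, hf _, sq]
end

theorem C_one_sub_sum_mul_nodal_add_sum {ι R : Type*} [DecidableEq ι] [CommRing R]
    (s : Finset ι) (v w : ι → R) :
    C (1 - ∑ k ∈ s, w k) * nodal s v + ∑ j ∈ s, C (w j) * (X * nodal (s.erase j) v) =
      nodal s v + ∑ j ∈ s, C (w j * v j) * nodal (s.erase j) v := by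
  have hsplit : ∑ j ∈ s, C (w j) * (X * nodal (s.erase j) v) =
      ∑ j ∈ s, (C (w j) * nodal s v + C (w j * v j) * nodal (s.erase j) v) :=
    sum_congr rfl fun j hj => by rw [nodal_eq_mul_nodal_erase hj, C_mul]; ring
  rw [hsplit, sum_add_distrib, ← sum_mul, map_sub, map_one, map_sum]
  ring

section
variable {R : Type*} [CommRing R] {n : ℕ}

theorem vandermonde_mul_of_coeff (v : Fin n → R) (p : Fin n → R[X])
    (hp : ∀ j, (p j).natDegree < n) :
    vandermonde v * Matrix.of (fun i j : Fin n => (p j).coeff (i : ℕ)) =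
      Matrix.of (fun i j => (p j).eval (v i)) := by
  ext i j
  rw [mul_apply, of_apply, eval_eq_sum_range' (hp j), ← Fin.sum_univ_eq_sum_range]
  exact sum_congr rfl fun k _ => mul_comm _ _

noncomputable def nodalEraseCoeffMatrix (v : Fin n → R) : Matrix (Fin n) (Fin n) R :=
  Matrix.of fun i j => (nodal (univ.erase j) v).coeff (i : ℕ)

theorem vandermonde_mul_nodalEraseCoeffMatrix [Nontrivial R] (v : Fin n → R) :
    vandermonde v * nodalEraseCoeffMatrix v =
      diagonal fun j => ∏ k ∈ univ.erase j, (v j - v k) := by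
  rw [nodalEraseCoeffMatrix, vandermonde_mul_of_coeff]
  · ext l j
    rcases eq_or_ne l j with rfl | hlj
    · simp [eval_nodal]
    · rw [of_apply, diagonal_apply_ne _ hlj,
        eval_nodal_at_node (mem_erase.2 ⟨hlj, mem_univ l⟩)]
  · intro j
    rw [natDegree_nodal, card_erase_of_mem (mem_univ j), card_univ, Fintype.card_fin]
    exact Nat.sub_lt j.pos one_pos
end

theorem abs_det_nodalEraseCoeffMatrix {K : Type*} [CommRing K] [LinearOrder K]
    [IsStrictOrderedRing K] {n : ℕ} {v : Fin n → K} (hv : Function.Injective v) :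
    |(nodalEraseCoeffMatrix v).det| =
      ∏ p ∈ univ.filter (fun p : Fin n × Fin n => p.1 < p.2), |v p.1 - v p.2| := by
  set P := ∏ i, ∏ j ∈ Ioi i, |v i - v j|
  have hV : |(vandermonde v).det| = P := by
    simp only [det_vandermonde, abs_prod, P, abs_sub_comm]
  have hP : P ≠ 0 := hV ▸ abs_ne_zero.2 (det_vandermonde_ne_zero_iff.2 hv)
  have h := congrArg (|·|) (congrArg det (vandermonde_mul_nodalEraseCoeffMatrix v))
  simp only [det_mul, det_diagonal, abs_mul, abs_prod, hV] at h
  rw [prod_prod_erase_eq_sq (fun i j => |v i - v j|) fun i j => abs_sub_comm _ _, sq] at h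
  rw [prod_filter_lt_eq_prod_prod_Ioi (fun i j => |v i - v j|)]
  exact mul_left_cancel₀ hP h

theorem weightsToCoeffs0_eq {m : ℕ} (lam v : Fin m → ℝ) :
    weightsToCoeffs0 lam v =
      (fun i : Fin m => (nodal univ lam).coeff (i : ℕ)) +
        (nodalEraseCoeffMatrix lam * diagonal lam) *ᵥ v := by
  funext i
  simp only [weightsToCoeffs0, ← nodal_eq]
  rw [C_one_sub_sum_mul_nodal_add_sum, coeff_add, finsetSum_coeff]
  simp only [Pi.add_apply, mulVec, dotProduct, mul_diagonal, nodalEraseCoeffMatrix, of_apply,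
    coeff_C_mul]
  exact congrArg _ (sum_congr rfl fun j _ => by ring)

theorem hasFDerivAt_weightsToCoeffs0 {m : ℕ} (lam w : Fin m → ℝ) :
    HasFDerivAt (weightsToCoeffs0 lam)
      (toLin' (nodalEraseCoeffMatrix lam * diagonal lam)).toContinuousLinearMap w := by
  rw [_root_.funext (weightsToCoeffs0_eq lam)]
  exact (ContinuousLinearMap.hasFDerivAt
    (toLin' (nodalEraseCoeffMatrix lam * diagonal lam)).toContinuousLinearMap).const_add _

theorem stmt14_general (m : ℕ) (lam : Fin m → ℝ) (hlam : Function.Injective lam)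
    (w : Fin m → ℝ) :
    DifferentiableAt ℝ (weightsToCoeffs0 lam) w ∧
    |LinearMap.det ((fderiv ℝ (weightsToCoeffs0 lam) w).toLinearMap)| =
      (∏ j, |lam j|) *
        ∏ p ∈ Finset.univ.filter (fun p : Fin m × Fin m => p.1 < p.2),
          |lam p.1 - lam p.2| := by
  have hF := hasFDerivAt_weightsToCoeffs0 lam w
  refine ⟨hF.differentiableAt, ?_⟩
  rw [hF.fderiv, LinearMap.coe_toContinuousLinearMap, LinearMap.det_toLin', det_mul, det_diagonal,
    abs_mul, abs_det_nodalEraseCoeffMatrix hlam, abs_prod, mul_comm]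

/-- for fixed distinct nonzero reals λ₁,…,λ_m, the map
(w₁,…,w_m) ↦ (q₀,…,q_{m−1}) is differentiable on the open simplex and the absolute
value of its Jacobian determinant is ∏_j |λ_j| · ∏_{j<k} |λ_j − λ_k| at every point. -/
theorem stmt14 (m : ℕ) (lam : Fin m → ℝ) (hlam : Function.Injective lam)
    (hlam0 : ∀ j, lam j ≠ 0)
    (w : Fin m → ℝ) (hw : ∀ j, 0 < w j) (hw1 : ∑ j, w j < 1) :
    DifferentiableAt ℝ (weightsToCoeffs0 lam) w ∧
    |LinearMap.det ((fderiv ℝ (weightsToCoeffs0 lam) w).toLinearMap)| =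
      (∏ j, |lam j|) *
        ∏ p ∈ Finset.univ.filter (fun p : Fin m × Fin m => p.1 < p.2),
          |lam p.1 - lam p.2| :=
  stmt14_general m lam hlam w
end

section
/- Let λ_1,…,λ_m be distinct nonzero reals, w_0,w_1,…,w_m > 0 with Σ_{j=0}^m w_j = 1, l > 0, and let z_1,…,z_m be the roots (with multiplicity) of Q_l(z) := (1+il)∏_{j=1}^m(z−λ_j) − i l q(z), where q(z) := w_0∏_{j=1}^m(z−λ_j) + Σ_{j=1}^m w_j z ∏_{k≠j}(z−λ_k). Then ∏_{j=1}^m z_j = (1 + il − i l w_0) · ∏_{j=1}^m λ_j; in particular w_0 = |Im(∏_{j=1}^m z_j) − l·Re(∏_{j=1}^m z_j)| / |l·Re(∏_{j=1}^m z_j)|. -/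
open Polynomial

theorem Polynomial.eval_zero_prod_X_sub_C {R ι : Type*} [CommRing R] (s : Finset ι) (f : ι → R) :
    (∏ j ∈ s, (X - C (f j))).eval 0 = (-1) ^ s.card * ∏ j ∈ s, f j := by
  simp [eval_prod, Finset.prod_neg]

theorem Polynomial.prod_eq_of_eval_zero_prod_X_sub_C {R ι : Type*} [CommRing R] [Fintype ι]
    {z μ : ι → R} {a : R}
    (h : (∏ j, (X - C (z j))).eval 0 = a * (∏ j, (X - C (μ j))).eval 0) :
    ∏ j, z j = a * ∏ j, μ j := by
  simp only [eval_zero_prod_X_sub_C] at h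
  have hunit : IsUnit ((-1 : R) ^ (Finset.univ : Finset ι).card) := isUnit_neg_one.pow _
  rw [mul_left_comm] at h
  exact hunit.mul_left_cancel h

theorem Complex.eq_abs_im_sub_mul_re_div {l w L : ℝ} (hl : l ≠ 0) (hL : L ≠ 0) (hw : 0 ≤ w) :
    w = |((1 + I * l - I * l * w) * L).im - l * ((1 + I * l - I * l * w) * L).re| /
      |l * ((1 + I * l - I * l * w) * L).re| := by
  have hre : ((1 + I * l - I * l * w) * L).re = L := by simp
  have him : ((1 + I * l - I * l * w) * L).im = (l - l * w) * L := by simp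
  rw [hre, him, show (l - l * w) * L - l * L = -(w * (l * L)) by ring, abs_neg, abs_mul,
    abs_of_nonneg hw, mul_div_cancel_right₀ _ (abs_ne_zero.2 (mul_ne_zero hl hL))]

theorem stmt15_general (m : ℕ) (lam : Fin m → ℝ)
    (hlam0 : ∀ j, lam j ≠ 0)
    (w0 : ℝ) (w : Fin m → ℝ) (hw0 : 0 < w0)
    (l : ℝ) (hl : 0 < l) (z : Fin m → ℂ)
    (hz : C (1 + Complex.I * l) * ∏ j, (X - C (lam j : ℂ)) -
        C (Complex.I * l) *
          (C (w0 : ℂ) * ∏ j, (X - C (lam j : ℂ)) +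
            ∑ j, C (w j : ℂ) * (X * ∏ k ∈ Finset.univ.erase j, (X - C (lam k : ℂ)))) =
      ∏ j, (X - C (z j))) :
    (∏ j, z j) = (1 + Complex.I * l - Complex.I * l * w0) * ∏ j, (lam j : ℂ) ∧
    w0 = |(∏ j, z j).im - l * (∏ j, z j).re| / |l * (∏ j, z j).re| := by
  -- every summand of q carries a factor z, so only the w₀-term survives at z = 0
  have hconst : (∏ j, (X - C (z j))).eval 0 =
      (1 + Complex.I * l - Complex.I * l * w0) * (∏ j, (X - C (lam j : ℂ))).eval 0 := by
    rw [← hz]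
    simp only [eval_sub, eval_mul, eval_add, eval_C, eval_finsetSum, eval_X, zero_mul, mul_zero,
      Finset.sum_const_zero, add_zero]
    ring
  have hprod := prod_eq_of_eval_zero_prod_X_sub_C hconst
  refine ⟨hprod, ?_⟩
  rw [hprod, ← Complex.ofReal_prod]
  exact Complex.eq_abs_im_sub_mul_re_div hl.ne' (Finset.prod_ne_zero_iff.2 fun j _ => hlam0 j)
    hw0.le

/-- with λ_j distinct nonzero reals, weights w₀,w₁,…,w_m > 0 summing to 1,
l > 0, and z_1,…,z_m the roots (with multiplicity) of
Q_l(z) = (1+il)∏(z−λ_j) − i l q(z), q(z) = w₀∏(z−λ_j) + Σ w_j z ∏_{k≠j}(z−λ_k):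
∏ z_j = (1 + il − i l w₀)·∏ λ_j, and w₀ = |Im ∏ z_j − l Re ∏ z_j| / |l Re ∏ z_j|. -/
theorem stmt15 (m : ℕ) (lam : Fin m → ℝ) (hlam : Function.Injective lam)
    (hlam0 : ∀ j, lam j ≠ 0)
    (w0 : ℝ) (w : Fin m → ℝ) (hw0 : 0 < w0) (hw : ∀ j, 0 < w j)
    (hsum : w0 + ∑ j, w j = 1)
    (l : ℝ) (hl : 0 < l) (z : Fin m → ℂ)
    (hz : C (1 + Complex.I * l) * ∏ j, (X - C (lam j : ℂ)) -
        C (Complex.I * l) *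
          (C (w0 : ℂ) * ∏ j, (X - C (lam j : ℂ)) +
            ∑ j, C (w j : ℂ) * (X * ∏ k ∈ Finset.univ.erase j, (X - C (lam k : ℂ)))) =
      ∏ j, (X - C (z j))) :
    (∏ j, z j) = (1 + Complex.I * l - Complex.I * l * w0) * ∏ j, (lam j : ℂ) ∧
    w0 = |(∏ j, z j).im - l * (∏ j, z j).re| / |l * (∏ j, z j).re| :=
  stmt15_general m lam hlam0 w0 w hw0 l hl z hz
end

section
/- Let λ_1,…,λ_m be distinct nonzero reals, w_0,w_1,…,w_m > 0 with Σ_{j=0}^m w_j = 1, l > 0, and let z_1,…,z_m be the roots (with multiplicity) of Q_l(z) := (1+il)∏_{j=1}^m(z−λ_j) − i l q(z), where q(z) := w_0∏_{j=1}^m(z−λ_j) + Σ_{j=1}^m w_j z ∏_{k≠j}(z−λ_k). Then ∏_{j=1}^m w_j = ∏_{j,k=1}^m |\bar{z}_j − z_k| / ( (2l)^m · |∏_{j=1}^m λ_j| · ∏_{1≤j<k≤m} |λ_j − λ_k|² ). -/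
open Polynomial ComplexConjugate

/-! Write `Q_l = p̂ - i l r` with the real polynomial `r := q - p̂`. At a root `z` of `Q_l` we have
`p̂(z) = i l r(z)`, and as `p̂`, `r` have real coefficients,
`Q_l(z̄) = conj (p̂(z) + i l r(z)) = -2 i l · conj (r(z))`, so `∏_k |z̄_j - z_k| = 2 l |r(z_j)|`.
Since `Q_l - p̂ = -i l r`, the resultants of `Q_l` and of `p̂` with `r` coincide, i.e.
`∏_j r(z_j) = ∏_j r(λ_j)`, and `r(λ_j) = q(λ_j) = w_j λ_j ∏_{k ≠ j} (λ_j - λ_k)`. -/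

theorem Polynomial.resultant_prod_X_sub_C_left {R ι : Type*} [CommRing R] [Nontrivial R]
    (s : Finset ι) (a : ι → R) (g : R[X]) (n : ℕ) (hg : g.natDegree ≤ n) :
    (∏ i ∈ s, (X - C (a i))).resultant g s.card n = ∏ i ∈ s, g.eval (a i) := by
  have := resultant_prod_left s (fun i => X - C (a i)) g n (by simp) hg
  simp only [natDegree_finsetProd_X_sub_C_eq_card, natDegree_X_sub_C] at this
  rw [this]
  exact Finset.prod_congr rfl fun i _ => resultant_X_sub_C_left g n (a i) hg

theorem Polynomial.prod_eval_eq_of_prod_X_sub_C_sub_eq {R ι : Type*} [CommRing R] [IsDomain R]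
    [Fintype ι] (a b : ι → R) {c : R} (hc : c ≠ 0) (g : R[X])
    (h : ∏ i, (X - C (a i)) - ∏ i, (X - C (b i)) = C c * g) :
    ∏ i, g.eval (a i) = ∏ i, g.eval (b i) := by
  have hg : g.natDegree ≤ (Finset.univ : Finset ι).card := by
    rw [← natDegree_C_mul hc, ← h]
    exact (natDegree_sub_le _ _).trans (by simp)
  have ha : ∏ i, (X - C (a i)) = ∏ i, (X - C (b i)) + g * C c := by linear_combination h
  rw [← resultant_prod_X_sub_C_left _ _ _ _ hg, ← resultant_prod_X_sub_C_left _ _ _ _ hg, ha,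
    resultant_add_mul_left _ _ _ _ _ (by simp) hg]

theorem Finset.prod_prod_erase_eq_prod_filter_lt_sq {ι M : Type*} [CommMonoid M] [Fintype ι]
    [LinearOrder ι] (f : ι → ι → M) (hf : ∀ i j, f i j = f j i) :
    ∏ i, ∏ j ∈ univ.erase i, f i j =
      ∏ p ∈ univ.filter (fun p : ι × ι => p.1 < p.2), f p.1 p.2 ^ 2 := by
  calc ∏ i, ∏ j ∈ univ.erase i, f i j
      = ∏ p : ι × ι, (if p.1 < p.2 then f p.1 p.2 else 1) *
          (if p.2 < p.1 then f p.2 p.1 else 1) := by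
        rw [Fintype.prod_prod_type]
        refine prod_congr rfl fun i _ => ?_
        rw [← filter_ne', prod_filter]
        refine prod_congr rfl fun j _ => ?_
        rcases lt_trichotomy i j with h | rfl | h
        · simp [h, h.ne', h.not_gt]
        · simp
        · simp [h, h.ne, h.not_gt, hf i j]
    _ = ∏ p ∈ univ.filter (fun p : ι × ι => p.1 < p.2), f p.1 p.2 ^ 2 := by
        rw [prod_mul_distrib, Fintype.prod_equiv (Equiv.prodComm ι ι)
          (fun p => if p.2 < p.1 then f p.2 p.1 else 1) (fun p => if p.1 < p.2 then f p.1 p.2 else 1)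
          fun _ => rfl, ← prod_mul_distrib, prod_filter]
        simp only [← sq, ite_pow, one_pow]

theorem abs_prod_mul_mul_prod_erase_sub {ι : Type*} [Fintype ι] [LinearOrder ι] (w lam : ι → ℝ)
    (hw : ∀ j, 0 ≤ w j) :
    |∏ j, (w j * lam j * ∏ k ∈ Finset.univ.erase j, (lam j - lam k))| =
      (∏ j, w j) * |∏ j, lam j| *
        ∏ p ∈ Finset.univ.filter (fun p : ι × ι => p.1 < p.2), |lam p.1 - lam p.2| ^ 2 := by
  simp only [Finset.abs_prod, abs_mul, abs_of_nonneg (hw _), Finset.prod_mul_distrib]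
  rw [Finset.prod_prod_erase_eq_prod_filter_lt_sq _ fun i j => abs_sub_comm (lam i) (lam j)]

theorem Complex.norm_aeval_conj_sub_I_mul {P R : ℝ[X]} {l : ℝ} {z : ℂ}
    (hz : aeval z P - I * l * aeval z R = 0) :
    ‖aeval (conj z) P - I * l * aeval (conj z) R‖ = 2 * |l| * ‖aeval z R‖ := by
  have hz' := congrArg conj hz
  simp only [map_sub, map_mul, conj_I, conj_ofReal, map_zero] at hz'
  have : conj (aeval z P) - I * l * conj (aeval z R) = -(2 * I * l) * conj (aeval z R) := by
    linear_combination hz'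
  rw [aeval_conj, aeval_conj, this]
  simp

section Jacobi

variable {ι : Type*} [Fintype ι]

noncomputable def pHat (lam : ι → ℝ) : ℝ[X] := ∏ j, (X - C (lam j))

noncomputable def qPoly [DecidableEq ι] (w0 : ℝ) (w lam : ι → ℝ) : ℝ[X] :=
  C w0 * pHat lam + ∑ j, C (w j) * (X * ∏ k ∈ Finset.univ.erase j, (X - C (lam k)))

theorem eval_qPoly_sub_pHat [DecidableEq ι] (w0 : ℝ) (w lam : ι → ℝ) (j : ι) :
    (qPoly w0 w lam - pHat lam).eval (lam j) =
      w j * lam j * ∏ k ∈ Finset.univ.erase j, (lam j - lam k) := by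
  have hvanish : ∀ i, i ≠ j → ∏ k ∈ Finset.univ.erase i, (lam j - lam k) = 0 := fun i hi =>
    Finset.prod_eq_zero (Finset.mem_erase.2 ⟨hi.symm, Finset.mem_univ j⟩) (sub_self _)
  have hpHat : (pHat lam).eval (lam j) = 0 := by
    simp [pHat, eval_prod, Finset.prod_eq_zero (Finset.mem_univ j)]
  simp only [qPoly, eval_sub, eval_add, eval_mul, eval_C, hpHat, eval_finsetSum, eval_X, eval_prod]
  rw [Finset.sum_eq_single j (fun i _ hi => by rw [hvanish i hi, mul_zero, mul_zero])
    (by simp)]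
  ring

theorem map_pHat_sub_C_mul_map [DecidableEq ι] (lam : ι → ℝ) (w0 : ℝ) (w : ι → ℝ) (c : ℂ) :
    C (1 + c) * ∏ j, (X - C (lam j : ℂ)) -
        C c * (C (w0 : ℂ) * ∏ j, (X - C (lam j : ℂ)) +
          ∑ j, C (w j : ℂ) * (X * ∏ k ∈ Finset.univ.erase j, (X - C (lam k : ℂ)))) =
      (pHat lam).map (algebraMap ℝ ℂ) - C c * (qPoly w0 w lam - pHat lam).map (algebraMap ℝ ℂ) := by
  simp only [qPoly, pHat, Polynomial.map_sub, Polynomial.map_add, Polynomial.map_mul,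
    Polynomial.map_prod, Polynomial.map_sum, map_X, map_C, Complex.coe_algebraMap, map_add, map_one]
  ring

theorem prod_prod_norm_conj_sub_eq {lam : ι → ℝ} {R : ℝ[X]} {l : ℝ} (hl : l ≠ 0) {z : ι → ℂ}
    (hz : (pHat lam).map (algebraMap ℝ ℂ) - C (Complex.I * l) * R.map (algebraMap ℝ ℂ) =
      ∏ j, (X - C (z j))) :
    ∏ j, ∏ k, ‖conj (z j) - z k‖ = (2 * |l|) ^ Fintype.card ι * |∏ j, R.eval (lam j)| := by
  have hroot : ∀ j, aeval (z j) (pHat lam) - Complex.I * l * aeval (z j) R = 0 := fun j => by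
    simpa [eval_prod, eval_map_algebraMap, Finset.prod_eq_zero (Finset.mem_univ j)]
      using congrArg (eval (z j)) hz
  have hnorm : ∀ j, ∏ k, ‖conj (z j) - z k‖ = 2 * |l| * ‖aeval (z j) R‖ := fun j => by
    rw [← Complex.norm_aeval_conj_sub_I_mul (hroot j), ← norm_prod]
    simpa [eval_prod, eval_map_algebraMap] using congrArg (fun p => ‖eval (conj (z j)) p‖) hz.symm
  have hres : ∏ j, aeval (z j) R = ∏ j, aeval (lam j : ℂ) R := by
    simp_rw [← eval_map_algebraMap]
    refine prod_eval_eq_of_prod_X_sub_C_sub_eq z _ (c := -(Complex.I * l)) (by simp [hl]) _ ?_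
    rw [← hz]
    simp [pHat, Polynomial.map_prod]
  rw [Finset.prod_congr rfl fun j _ => hnorm j, Finset.prod_mul_distrib, Finset.prod_const,
    Finset.card_univ, ← norm_prod, hres]
  simp_rw [← Complex.coe_algebraMap, aeval_algebraMap_apply_eq_algebraMap_eval, ← map_prod,
    Complex.coe_algebraMap, Complex.norm_real, Real.norm_eq_abs]

end Jacobi

theorem stmt16_general (m : ℕ) (lam : Fin m → ℝ) (hlam : Function.Injective lam)
    (hlam0 : ∀ j, lam j ≠ 0)
    (w0 : ℝ) (w : Fin m → ℝ) (hw : ∀ j, 0 < w j)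
    (l : ℝ) (hl : 0 < l) (z : Fin m → ℂ)
    (hz : C (1 + Complex.I * l) * ∏ j, (X - C (lam j : ℂ)) -
        C (Complex.I * l) *
          (C (w0 : ℂ) * ∏ j, (X - C (lam j : ℂ)) +
            ∑ j, C (w j : ℂ) * (X * ∏ k ∈ Finset.univ.erase j, (X - C (lam k : ℂ)))) =
      ∏ j, (X - C (z j))) :
    ∏ j, w j =
      (∏ j, ∏ k, ‖(starRingEnd ℂ) (z j) - z k‖) /
        ((2 * l) ^ m * |∏ j, lam j| *
          ∏ p ∈ Finset.univ.filter (fun p : Fin m × Fin m => p.1 < p.2),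
            |lam p.1 - lam p.2| ^ 2) := by
  rw [map_pHat_sub_C_mul_map] at hz
  have hden : (2 * l) ^ m * |∏ j, lam j| *
      ∏ p ∈ Finset.univ.filter (fun p : Fin m × Fin m => p.1 < p.2), |lam p.1 - lam p.2| ^ 2 ≠ 0 := by
    refine mul_ne_zero (mul_ne_zero (by positivity) ?_) (Finset.prod_ne_zero_iff.2 fun p hp => ?_)
    · exact abs_ne_zero.2 (Finset.prod_ne_zero_iff.2 fun j _ => hlam0 j)
    · exact pow_ne_zero _ (abs_ne_zero.2 (sub_ne_zero.2 (hlam.ne (Finset.mem_filter.1 hp).2.ne)))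
  rw [eq_div_iff hden, prod_prod_norm_conj_sub_eq hl.ne' hz, abs_of_pos hl, Fintype.card_fin]
  simp_rw [eval_qPoly_sub_pHat, abs_prod_mul_mul_prod_erase_sub w lam fun j => (hw j).le]
  ring

/-- with λ_j distinct nonzero reals, weights w₀,w₁,…,w_m > 0 summing to 1,
l > 0, and z_1,…,z_m the roots (with multiplicity) of
Q_l(z) = (1+il)∏(z−λ_j) − i l q(z), q(z) = w₀∏(z−λ_j) + Σ w_j z ∏_{k≠j}(z−λ_k):
∏_{j=1}^m w_j = ∏_{j,k} |z̄_j − z_k| / ((2l)^m · |∏ λ_j| · ∏_{j<k} |λ_j − λ_k|²). -/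
theorem stmt16 (m : ℕ) (lam : Fin m → ℝ) (hlam : Function.Injective lam)
    (hlam0 : ∀ j, lam j ≠ 0)
    (w0 : ℝ) (w : Fin m → ℝ) (hw0 : 0 < w0) (hw : ∀ j, 0 < w j)
    (hsum : w0 + ∑ j, w j = 1)
    (l : ℝ) (hl : 0 < l) (z : Fin m → ℂ)
    (hz : C (1 + Complex.I * l) * ∏ j, (X - C (lam j : ℂ)) -
        C (Complex.I * l) *
          (C (w0 : ℂ) * ∏ j, (X - C (lam j : ℂ)) +
            ∑ j, C (w j : ℂ) * (X * ∏ k ∈ Finset.univ.erase j, (X - C (lam k : ℂ)))) =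
      ∏ j, (X - C (z j))) :
    ∏ j, w j =
      (∏ j, ∏ k, ‖(starRingEnd ℂ) (z j) - z k‖) /
        ((2 * l) ^ m * |∏ j, lam j| *
          ∏ p ∈ Finset.univ.filter (fun p : Fin m × Fin m => p.1 < p.2),
            |lam p.1 - lam p.2| ^ 2) :=
  stmt16_general m lam hlam hlam0 w0 w hw l hl z hz
end

section
/- Fix m ≥ 1 and l > 0, and let V ⊂ ℝ^{2m} be the open set of points (λ_1,…,λ_m, w_1,…,w_m) with λ_1,…,λ_m distinct and all nonzero, w_j > 0, and Σ_{j=1}^m w_j < 1. With w_0 := 1 − Σ_{j=1}^m w_j and q(z) := w_0∏_{j=1}^m(z−λ_j) + Σ_{j=1}^m w_j z ∏_{k≠j}(z−λ_k), define κ_0,…,κ_{m−1} ∈ ℂ by (1+il)∏_{j=1}^m(z−λ_j) − i l q(z) = z^m + Σ_{j=0}^{m−1} κ_j z^j. Then the map Ψ: V → ℝ^{2m}, Ψ = (Re κ_0,…,Re κ_{m−1}, Im κ_0,…,Im κ_{m−1}), is differentiable and |det DΨ| = l^m · |∏_{j=1}^m λ_j| · ∏_{1≤j<k≤m} |λ_j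 − λ_k|² at every point of V. -/
open Polynomial

/-- The map (λ₁,…,λ_m, w₁,…,w_m) ↦ (Re κ₀,…,Re κ_{m−1}, Im κ₀,…,Im κ_{m−1}), where
z^m + Σ κ_j z^j = (1+il)∏(z−λ_j) − i l q(z) with
q(z) = w₀∏_j(z−λ_j) + Σ_j w_j z ∏_{k≠j}(z−λ_k) and w₀ := 1 − Σ_j w_j. -/
noncomputable def specToCoeffs0 (m : ℕ) (l : ℝ) :
    ((Fin m → ℝ) × (Fin m → ℝ)) → ((Fin m → ℝ) × (Fin m → ℝ)) :=
  fun x =>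
    let lam := x.1
    let w := x.2
    let w0 : ℝ := 1 - ∑ k, w k
    let Q : Polynomial ℂ :=
      C (1 + Complex.I * l) * ∏ j, (X - C (lam j : ℂ)) -
        C (Complex.I * l) *
          (C (w0 : ℂ) * ∏ j, (X - C (lam j : ℂ)) +
            ∑ j, C (w j : ℂ) * (X * ∏ k ∈ Finset.univ.erase j, (X - C (lam k : ℂ))))
    (fun j : Fin m => (Q.coeff (j : ℕ)).re, fun j : Fin m => (Q.coeff (j : ℕ)).im)

/-!
Since `z ∏_{k≠j}(z − λ_k) = p̂ + λ_j p̂_j` with `p̂_j := ∏_{k≠j}(z − λ_k)`, and `w₀ + Σ w_j = 1`,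
the polynomial is `p̂ − i l Σ_j w_j λ_j p̂_j`. Hence `Re κ` is the coefficient vector of `p̂`, a
function of `λ` alone, and `Im κ = −l A diag(λ) w` is linear in `w`, where the `j`-th column of `A`
holds the coefficients of `p̂_j`. The Jacobian is therefore block triangular with diagonal blocks
`∂(coeffs p̂)/∂λ = −A` and `−l A diag(λ)`, so `|det DΨ| = l^m |∏ λ_j| (det A)²`. Finally
`V A = diag(p̂_j(λ_j))` for the Vandermonde matrix `V`, and `∏_j p̂_j(λ_j) = ±(det V)²`, so that
`(det A)² = (det V)² = ∏_{j<k} (λ_j − λ_k)²`.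
-/

open Matrix Finset Lagrange

theorem LinearMap.det_eq_det_mul_det_of_comp_inr {R M N : Type*} [CommRing R]
    [AddCommGroup M] [Module R M] [Module.Free R M] [Module.Finite R M]
    [AddCommGroup N] [Module R N] [Module.Free R N] [Module.Finite R N]
    (L : Module.End R (M × N)) (g : Module.End R N)
    (h : L ∘ₗ LinearMap.inr R M N = LinearMap.inr R M N ∘ₗ g) :
    L.det = (LinearMap.fst R M N ∘ₗ L ∘ₗ LinearMap.inl R M N).det * g.det := by
  have hL (y : N) : L (0, y) = (0, g y) := LinearMap.congr_fun h y
  let b := Module.Free.chooseBasis R M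
  let c := Module.Free.chooseBasis R N
  have hblocks : LinearMap.toMatrix (b.prod c) (b.prod c) L =
      Matrix.fromBlocks (LinearMap.toMatrix b b (LinearMap.fst R M N ∘ₗ L ∘ₗ LinearMap.inl R M N)) 0
        (LinearMap.toMatrix b c (LinearMap.snd R M N ∘ₗ L ∘ₗ LinearMap.inl R M N))
        (LinearMap.toMatrix c c g) := by
    ext (i | i) (j | j) <;>
      simp [LinearMap.toMatrix_apply, Module.Basis.prod_repr_inl, Module.Basis.prod_repr_inr,
        Module.Basis.prod_apply, hL]
  rw [← LinearMap.det_toMatrix (b.prod c), hblocks, Matrix.det_fromBlocks_zero₁₂,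
    LinearMap.det_toMatrix, LinearMap.det_toMatrix]

section
variable {𝕜 ι : Type*} [NontriviallyNormedField 𝕜] [Fintype ι]

theorem differentiableAt_mulVec {E : Type*} [NormedAddCommGroup E] [NormedSpace 𝕜 E]
    {M : E → Matrix ι ι 𝕜} {u : E → ι → 𝕜} {x : E}
    (hM : ∀ i j, DifferentiableAt 𝕜 (fun y => M y i j) x) (hu : DifferentiableAt 𝕜 u x) :
    DifferentiableAt 𝕜 (fun y => M y *ᵥ u y) x := by
  rw [differentiableAt_pi] at hu ⊢
  intro i
  simp only [mulVec, dotProduct]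
  fun_prop

theorem det_fderiv_prodMk_mulVec [DecidableEq ι] [CompleteSpace 𝕜] {f : (ι → 𝕜) → ι → 𝕜}
    {f' : (ι → 𝕜) →L[𝕜] ι → 𝕜}
    {M : (ι → 𝕜) → Matrix ι ι 𝕜} {a b : ι → 𝕜} (hf : HasFDerivAt f f' a)
    (hM : ∀ i j, DifferentiableAt 𝕜 (fun x => M x i j) a) :
    DifferentiableAt 𝕜 (fun x : (ι → 𝕜) × (ι → 𝕜) => (f x.1, M x.1 *ᵥ x.2)) (a, b) ∧
      (fderiv 𝕜 (fun x : (ι → 𝕜) × (ι → 𝕜) => (f x.1, M x.1 *ᵥ x.2)) (a, b)).toLinearMap.det =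
        f'.toLinearMap.det * (M a).det := by
  set F := fun x : (ι → 𝕜) × (ι → 𝕜) => (f x.1, M x.1 *ᵥ x.2)
  have hF : DifferentiableAt 𝕜 F (a, b) :=
    (hf.differentiableAt.fun_comp' (a, b) differentiableAt_fst).prodMk
      (differentiableAt_mulVec
        (fun i j => (hM i j).fun_comp' (g := fun x => M x i j) (a, b) differentiableAt_fst)
        differentiableAt_snd)
  refine ⟨hF, ?_⟩
  set L := fderiv 𝕜 F (a, b)
  let g := LinearMap.toContinuousLinearMap (Matrix.toLin' (M a))
  have h_inl : (ContinuousLinearMap.fst 𝕜 _ _).comp (L.comp (ContinuousLinearMap.inl 𝕜 _ _)) = f' :=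
    (hF.hasFDerivAt.comp a (hasFDerivAt_prodMk_left a b)).fst.unique hf
  have h_inr : L.comp (ContinuousLinearMap.inr 𝕜 _ _) = (ContinuousLinearMap.inr 𝕜 _ _).comp g := by
    refine (hF.hasFDerivAt.comp b (hasFDerivAt_prodMk_right a b)).unique ?_
    have hg : HasFDerivAt (fun w => (f a, g w)) ((0 : (ι → 𝕜) →L[𝕜] ι → 𝕜).prod g) b :=
      (hasFDerivAt_const (f a) b).prodMk g.hasFDerivAt
    exact hg.congr_fderiv (by ext <;> simp)
  rw [LinearMap.det_eq_det_mul_det_of_comp_inr L.toLinearMap g.toLinearMap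
    (congrArg ContinuousLinearMap.toLinearMap h_inr), ← h_inl]
  simp [g]
end

namespace Lagrange

variable {R S ι : Type*} [CommRing R] [CommRing S] [DecidableEq ι]

theorem X_mul_nodal_erase {s : Finset ι} {v : ι → R} {i : ι} (hi : i ∈ s) :
    X * nodal (s.erase i) v = nodal s v + C (v i) * nodal (s.erase i) v := by
  rw [nodal_eq_mul_nodal_erase hi]
  ring

omit [DecidableEq ι] in
theorem map_nodal (f : R →+* S) (s : Finset ι) (v : ι → R) :
    (nodal s v).map f = nodal s (f ∘ v) := by
  simp [nodal, Polynomial.map_prod]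

theorem C_one_sub_sum_mul_nodal_add_sum [Fintype ι] (v w : ι → R) :
    C (1 - ∑ k, w k) * nodal univ v + ∑ j, C (w j) * (X * nodal (univ.erase j) v) =
      nodal univ v + ∑ j, C (w j * v j) * nodal (univ.erase j) v := by
  simp_rw [X_mul_nodal_erase (mem_univ _), mul_add, sum_add_distrib, ← sum_mul, C_mul, mul_assoc,
    map_sub, map_one, map_sum]
  ring

variable {𝕜 : Type*} [NontriviallyNormedField 𝕜] [Fintype ι]

theorem hasFDerivAt_coeff_mul_nodal (q : 𝕜[X]) (s : Finset ι) (n : ℕ) (v : ι → 𝕜) :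
    HasFDerivAt (fun u => (q * nodal s u).coeff n)
      (-∑ k ∈ s, (q * nodal (s.erase k) v).coeff n •
        (ContinuousLinearMap.proj k : (ι → 𝕜) →L[𝕜] 𝕜)) v := by
  induction s using Finset.induction_on generalizing q n with
  | empty => simpa using hasFDerivAt_const ((q * 1).coeff n) v
  | insert a s ha ih =>
    have hsplit (t : Finset ι) (ht : a ∉ t) (u : ι → 𝕜) : (q * nodal (insert a t) u).coeff n =
        (q * X * nodal t u).coeff n - u a * (q * nodal t u).coeff n := by
      rw [nodal_insert_eq_nodal ht, ← coeff_C_mul, ← coeff_sub]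
      congr 1
      ring
    rw [funext (hsplit s ha)]
    refine ((ih (q * X) n).sub ((hasFDerivAt_apply a v).mul (ih q n))).congr_fderiv ?_
    have herase (k) (hk : k ∈ s) :
        (q * nodal ((insert a s).erase k) v).coeff n •
            (ContinuousLinearMap.proj k : (ι → 𝕜) →L[𝕜] 𝕜) =
          (q * X * nodal (s.erase k) v).coeff n • ContinuousLinearMap.proj k -
            v a • (q * nodal (s.erase k) v).coeff n • ContinuousLinearMap.proj k := by
      rw [erase_insert_of_ne (ne_of_mem_of_not_mem hk ha).symm,
        hsplit _ fun h => ha (mem_of_mem_erase h)]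
      module
    rw [sum_insert ha, erase_insert ha, sum_congr rfl herase, sum_sub_distrib, ← smul_sum]
    module

end Lagrange

namespace Matrix

variable {R : Type*} [CommRing R] {n : ℕ}

theorem vandermonde_mul_coeff_eq_eval (v : Fin n → R) (p : Fin n → R[X])
    (hp : ∀ j, (p j).natDegree < n) :
    vandermonde v * of (fun (i j : Fin n) => (p j).coeff i) = of fun i j => (p j).eval (v i) := by
  ext i j
  rw [of_apply, eval_eq_sum_range' (hp j), ← Fin.sum_univ_eq_sum_range]
  simp [Matrix.mul_apply, mul_comm]

theorem prod_prod_erase_sub_sq (v : Fin n → R) :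
    (∏ k, ∏ r ∈ univ.erase k, (v k - v r)) ^ 2 = (vandermonde v).det ^ 4 := by
  simp_rw [det_vandermonde, ← compl_singleton, ← prod_prod_Ioi_mul_eq_prod_prod_off_diag,
    ← prod_pow]
  exact prod_congr rfl fun i _ => prod_congr rfl fun j _ => by ring

theorem det_vandermonde_sq (v : Fin n → R) :
    (vandermonde v).det ^ 2 =
      ∏ p ∈ univ.filter (fun p : Fin n × Fin n => p.1 < p.2), (v p.1 - v p.2) ^ 2 := by
  simp_rw [det_vandermonde, prod_filter, Fintype.prod_prod_type, ← prod_pow]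
  refine prod_congr rfl fun i _ => ?_
  rw [← prod_filter, filter_lt_eq_Ioi]
  exact prod_congr rfl fun j _ => by ring

end Matrix

section
variable {R : Type*} [CommRing R] {n : ℕ}

noncomputable def nodalEraseCoeffs (v : Fin n → R) : Matrix (Fin n) (Fin n) R :=
  Matrix.of fun j k => (nodal (univ.erase k) v).coeff j

theorem vandermonde_mul_nodalEraseCoeffs [Nontrivial R] (v : Fin n → R) :
    vandermonde v * nodalEraseCoeffs v = diagonal fun k => ∏ r ∈ univ.erase k, (v k - v r) := by
  rw [nodalEraseCoeffs, vandermonde_mul_coeff_eq_eval]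
  · ext i k
    rw [of_apply, eval_nodal, diagonal_apply]
    split_ifs with h
    · rw [h]
    · exact prod_eq_zero (mem_erase.2 ⟨h, mem_univ i⟩) (sub_self _)
  · intro k
    rw [natDegree_nodal, card_erase_of_mem (mem_univ k), card_univ, Fintype.card_fin]
    exact Nat.sub_lt (Fin.pos k) one_pos

theorem sq_det_nodalEraseCoeffs [IsDomain R] {v : Fin n → R} (hv : Function.Injective v) :
    (nodalEraseCoeffs v).det ^ 2 = (vandermonde v).det ^ 2 := by
  have hV : (vandermonde v).det ≠ 0 := det_vandermonde_ne_zero_iff.2 hv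
  have hsq := congrArg (fun M => M.det ^ 2) (vandermonde_mul_nodalEraseCoeffs v)
  simp only [det_mul, det_diagonal, mul_pow, prod_prod_erase_sub_sq] at hsq
  exact mul_left_cancel₀ (pow_ne_zero 2 hV) (by rw [hsq]; ring)

end

section
variable {𝕜 : Type*} [NontriviallyNormedField 𝕜] {n : ℕ}

theorem differentiable_nodalEraseCoeffs_apply (j k : Fin n) :
    Differentiable 𝕜 (fun v : Fin n → 𝕜 => nodalEraseCoeffs v j k) := fun v => by
  simpa [nodalEraseCoeffs] using (hasFDerivAt_coeff_mul_nodal 1 (univ.erase k) j v).differentiableAt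

theorem hasFDerivAt_coeff_nodal [CompleteSpace 𝕜] (v : Fin n → 𝕜) :
    HasFDerivAt (fun u : Fin n → 𝕜 => fun j : Fin n => (nodal univ u).coeff j)
      (LinearMap.toContinuousLinearMap (toLin' (-nodalEraseCoeffs v))) v := by
  refine hasFDerivAt_pi'' fun j => ?_
  have h := hasFDerivAt_coeff_mul_nodal (1 : 𝕜[X]) univ j v
  simp only [one_mul] at h
  refine h.congr_fderiv ?_
  ext u
  simp [nodalEraseCoeffs, mulVec, dotProduct]

end

theorem specToCoeffs0_eq (m : ℕ) (l : ℝ) (x : (Fin m → ℝ) × (Fin m → ℝ)) :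
    specToCoeffs0 m l x =
      (fun j : Fin m => (nodal univ x.1).coeff j,
        ((-l) • (nodalEraseCoeffs x.1 * diagonal x.1)) *ᵥ x.2) := by
  set S : ℝ[X] := ∑ k, C (x.2 k * x.1 k) * nodal (univ.erase k) x.1
  have hQ : C (1 + Complex.I * l) * ∏ j, (X - C (x.1 j : ℂ)) -
        C (Complex.I * l) *
          (C ((1 - ∑ k, x.2 k : ℝ) : ℂ) * ∏ j, (X - C (x.1 j : ℂ)) +
            ∑ j, C (x.2 j : ℂ) * (X * ∏ k ∈ univ.erase j, (X - C (x.1 k : ℂ)))) =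
      (nodal univ x.1).map Complex.ofRealHom - C (Complex.I * l) * S.map Complex.ofRealHom := by
    have hq := C_one_sub_sum_mul_nodal_add_sum (fun k => (x.1 k : ℂ)) (fun k => (x.2 k : ℂ))
    simp only [S, ← nodal_eq, Polynomial.map_sum, Polynomial.map_mul, map_C, map_nodal,
      Function.comp_def, Complex.ofRealHom_eq_coe]
    push_cast
    rw [hq, map_add, map_one]
    ring
  simp only [specToCoeffs0, hQ]
  ext j <;> simp only [coeff_sub, coeff_C_mul, coeff_map, Complex.ofRealHom_eq_coe]
  · simp
  · simp only [S, finsetSum_coeff, coeff_C_mul]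
    simp [mulVec, dotProduct, nodalEraseCoeffs, mul_sum]
    exact sum_congr rfl fun k _ => by ring

theorem stmt17_general (m : ℕ) (l : ℝ) (hl : 0 < l)
    (x : (Fin m → ℝ) × (Fin m → ℝ))
    (hlam : Function.Injective x.1) :
    DifferentiableAt ℝ (specToCoeffs0 m l) x ∧
    |LinearMap.det ((fderiv ℝ (specToCoeffs0 m l) x).toLinearMap)| =
      l ^ m * |∏ j, x.1 j| *
        ∏ p ∈ Finset.univ.filter (fun p : Fin m × Fin m => p.1 < p.2),
          |x.1 p.1 - x.1 p.2| ^ 2 := by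
  have hM (j k : Fin m) : DifferentiableAt ℝ
      (fun v => ((-l) • (nodalEraseCoeffs v * diagonal v)) j k) x.1 := by
    simp only [Matrix.smul_apply, mul_diagonal, smul_eq_mul]
    exact ((differentiable_nodalEraseCoeffs_apply j k x.1).mul
      (differentiableAt_apply k x.1)).const_mul _
  obtain ⟨hdiff, hdet⟩ := det_fderiv_prodMk_mulVec (b := x.2) (hasFDerivAt_coeff_nodal x.1) hM
  rw [funext (specToCoeffs0_eq m l)]
  refine ⟨hdiff, ?_⟩
  rw [hdet, LinearMap.coe_toContinuousLinearMap, LinearMap.det_toLin', det_neg, det_smul,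
    det_mul, det_diagonal, Fintype.card_fin]
  calc _ = l ^ m * |∏ j, x.1 j| * (nodalEraseCoeffs x.1).det ^ 2 := by
        simp only [abs_mul, abs_pow, abs_neg, abs_one, one_pow, one_mul, abs_of_pos hl]
        rw [← sq_abs (nodalEraseCoeffs x.1).det]
        ring
    _ = _ := by
        simp_rw [sq_det_nodalEraseCoeffs hlam, det_vandermonde_sq, sq_abs]

/-- for fixed l > 0, on the open set of (λ, w) with λ_j distinct and
nonzero, w_j > 0, Σ w_j < 1, the map Ψ = (Re κ, Im κ) is differentiable with
|det DΨ| = l^m · |∏ λ_j| · ∏_{j<k} |λ_j − λ_k|². -/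
theorem stmt17 (m : ℕ) (hm : 1 ≤ m) (l : ℝ) (hl : 0 < l)
    (x : (Fin m → ℝ) × (Fin m → ℝ))
    (hlam : Function.Injective x.1) (hlam0 : ∀ j, x.1 j ≠ 0)
    (hw : ∀ j, 0 < x.2 j) (hw1 : ∑ j, x.2 j < 1) :
    DifferentiableAt ℝ (specToCoeffs0 m l) x ∧
    |LinearMap.det ((fderiv ℝ (specToCoeffs0 m l) x).toLinearMap)| =
      l ^ m * |∏ j, x.1 j| *
        ∏ p ∈ Finset.univ.filter (fun p : Fin m × Fin m => p.1 < p.2),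
          |x.1 p.1 - x.1 p.2| ^ 2 :=
  stmt17_general m l hl x hlam
end
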